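/- arXiv:2311.09239 — 11 statements merged into one kernel-verified Lean document; each statement's English description precedes it below -/
import Mathlib

section
/- No total computable function eventually dominates β: for every total computable function g : ℕ → ℕ and every N ∈ ℕ, there exists J ≥ N with β(J) > g(J). -/
/-!
If β were bounded by a computable `g` from `N` on, then every `j ∈ A` would appear in the
enumeration `a` no later than stage `g (max (j + 1) N)`, so membership in `A` could be decided by
a bounded, hence computable, search through the enumeration.
-/

open scoped Classical

theorem ComputablePred.exists_lt {α : Type*} [Primcodable α] {R : α → ℕ → Prop}
    (hR : ComputablePred fun p : α × ℕ => R p.1 p.2) :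
    ComputablePred fun p : α × ℕ => ∃ n < p.2, R p.1 n := by
  obtain ⟨test, htest, hR⟩ := ComputablePred.computable_iff.1 hR
  let search (p : α × ℕ) : Bool :=
    Nat.rec (motive := fun _ => Bool) false (fun n found => found || test (p.1, n)) p.2
  have search_iff (x : α) (m : ℕ) : search (x, m) = true ↔ ∃ n < m, R x n := by
    induction m with
    | zero => simp [search]
    | succ m ih =>
      have step : search (x, m + 1) = (search (x, m) || test (x, m)) := rfl
      rw [step, Bool.or_eq_true, ih, Nat.exists_lt_succ_right, congrFun hR (x, m)]
  have step_computable : Computable₂ fun (p : α × ℕ) (q : ℕ × Bool) => q.2 || test (p.1, q.1) :=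
    Primrec.or.to_comp.comp (Computable.snd.comp Computable.snd) <|
      htest.comp ((Computable.fst.comp Computable.fst).pair (Computable.fst.comp Computable.snd))
  have search_computable : Computable search :=
    Computable.nat_rec Computable.snd (Computable.const false) step_computable
  exact ComputablePred.computable_iff.2
    ⟨search, search_computable, funext fun p => propext (search_iff p.1 p.2).symm⟩

theorem mem_range_iff_exists_lt_of_find_lt {α : Type*} [DecidableEq α] {a : ℕ → α} {B : α → ℕ}
    (hB : ∀ x (h : ∃ n, a n = x), Nat.find h < B x) (x : α) :
    x ∈ Set.range a ↔ ∃ n < B x, a n = x :=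
  ⟨fun h => ⟨Nat.find h, hB x h, Nat.find_spec h⟩, fun ⟨n, _, hn⟩ => ⟨n, hn⟩⟩

theorem Nat.find_le_sup_find {α : Type*} [DecidableEq α] {a : ℕ → α} {s : Finset α} {x : α}
    (hx : x ∈ s) (h : ∃ n, a n = x) :
    Nat.find h ≤ s.sup fun y => if h : ∃ n, a n = y then Nat.find h else 0 := by
  simpa only [dif_pos h] using
    Finset.le_sup (f := fun y => if h : ∃ n, a n = y then Nat.find h else 0) hx

theorem beta_not_eventually_dominated_general (a : ℕ → ℕ) (ha : Computable a)
    (hA : ¬ ComputablePred (fun j : ℕ => j ∈ Set.range a))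
    (β : ℕ → ℕ)
    (hβ : ∀ J : ℕ, β J =
      (Finset.range J).sup (fun j => if h : ∃ n, a n = j then Nat.find h else 0))
    (g : ℕ → ℕ) (hg : Computable g) (N : ℕ) :
    ∃ J : ℕ, N ≤ J ∧ g J < β J := by
  by_contra! hdom
  let B (j : ℕ) : ℕ := g (max (j + 1) N) + 1
  have hB : Computable B :=
    Computable.succ.comp (hg.comp (Primrec.nat_max.to_comp.comp Computable.succ
      (Computable.const N)))
  have find_lt (j : ℕ) (h : ∃ n, a n = j) : Nat.find h < B j := by
    have hj : j ∈ Finset.range (max (j + 1) N) := Finset.mem_range.2 (by omega)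
    exact Nat.lt_succ_of_le <|
      (Nat.find_le_sup_find hj h).trans (hβ _ ▸ hdom _ (le_max_right _ _))
  have bounded_search : ComputablePred fun p : ℕ × ℕ => ∃ n < p.2, a n = p.1 :=
    ComputablePred.exists_lt (R := fun j n => a n = j) <| Computable.computablePred <|
      Primrec.eq.decide.to_comp.comp (ha.comp Computable.snd) Computable.fst
  exact hA <| ComputablePred.computable_of_manyOneReducible
    ⟨fun j => (j, B j), Computable.id.pair hB, mem_range_iff_exists_lt_of_find_lt find_lt⟩
    bounded_search

/-- No total computable function eventually dominates
β(J) = max{ν(j) : j < J and j ∈ A} (with max ∅ = 0): for every computable `g`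
and every `N`, there exists `J ≥ N` with `β J > g J`. -/
theorem beta_not_eventually_dominated (a : ℕ → ℕ) (ha : Computable a)
    (hinj : Function.Injective a)
    (hA : ¬ ComputablePred (fun j : ℕ => j ∈ Set.range a))
    (β : ℕ → ℕ)
    (hβ : ∀ J : ℕ, β J =
      (Finset.range J).sup (fun j => if h : ∃ n, a n = j then Nat.find h else 0))
    (g : ℕ → ℕ) (hg : Computable g) (N : ℕ) :
    ∃ J : ℕ, N ≤ J ∧ g J < β J :=
  beta_not_eventually_dominated_general a ha hA β hβ g hg N
end

section
/- If m ≠ n then the supports of ψ_m and ψ_n do not intersect: there is no x ∈ ℝ with ψ_m(x) ≠ 0 and ψ_n(x) ≠ 0. -/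
/-!
A blip `ψ n` is nonzero only within distance `2^-(n + a n + 2) ≤ 2^-(a n) / 4` of its centre
`2^-(a n)`. For `A < B` the centres `2^-A` and `2^-B` are at distance at least `2^-A / 2`, which
exceeds the sum `2^-A / 4 + 2^-B / 4` of the radii, so blips with distinct `a n` have disjoint
supports, and `a` is injective.
-/

open Metric

lemma mem_ball_of_apply_mul_sub_ne_zero {φ : ℝ → ℝ} (hφ : ∀ y : ℝ, 1 ≤ |y| → φ y = 0)
    {s t x : ℝ} (hs : 0 < s) (h : φ (s * (x - t)) ≠ 0) : x ∈ ball t s⁻¹ := by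
  have hlt : s * |x - t| < 1 := by
    by_contra hge
    exact h (hφ _ (by rwa [abs_mul, abs_of_pos hs, ← not_lt]))
  rw [mem_ball, Real.dist_eq, ← mul_lt_mul_iff_right₀ hs, mul_inv_cancel₀ hs.ne']
  exact hlt

lemma inv_two_pow_add_add_two_le (n A : ℕ) :
    ((2 : ℝ) ^ (n + A + 2))⁻¹ ≤ (2 : ℝ) ^ (-(A : ℤ)) / 4 := by
  rw [zpow_neg, zpow_natCast, div_eq_mul_inv, ← mul_inv, pow_add, pow_add]
  gcongr
  · exact le_mul_of_one_le_left (by positivity) (one_le_pow₀ one_le_two)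
  · norm_num

lemma two_zpow_neg_le_half_of_lt {A B : ℕ} (hAB : A < B) :
    (2 : ℝ) ^ (-(B : ℤ)) ≤ (2 : ℝ) ^ (-(A : ℤ)) / 2 := by
  rw [div_eq_mul_inv, ← zpow_sub_one₀ two_ne_zero]
  exact zpow_le_zpow_right₀ one_le_two (by omega)

lemma pairwise_disjoint_ball_two_zpow_neg :
    Pairwise fun A B : ℕ => Disjoint (ball ((2 : ℝ) ^ (-(A : ℤ))) ((2 : ℝ) ^ (-(A : ℤ)) / 4))
      (ball ((2 : ℝ) ^ (-(B : ℤ))) ((2 : ℝ) ^ (-(B : ℤ)) / 4)) := by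
  have key : ∀ {A B : ℕ}, A < B →
      Disjoint (ball ((2 : ℝ) ^ (-(A : ℤ))) ((2 : ℝ) ^ (-(A : ℤ)) / 4))
        (ball ((2 : ℝ) ^ (-(B : ℤ))) ((2 : ℝ) ^ (-(B : ℤ)) / 4)) := by
    intro A B hAB
    apply ball_disjoint_ball
    have hB := two_zpow_neg_le_half_of_lt hAB
    have hB_pos : (0 : ℝ) < 2 ^ (-(B : ℤ)) := by positivity
    rw [Real.dist_eq, abs_of_pos (by linarith)]
    linarith
  intro A B hAB
  rcases hAB.lt_or_gt with h | h
  · exact key h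
  · exact (key h).symm

theorem blips_disjoint_support_general (a : ℕ → ℕ)
    (hinj : Function.Injective a)
    (φ : ℝ → ℝ)
    (hφ₂ : ∀ x : ℝ, 1 ≤ |x| → φ x = 0)
    (ψ : ℕ → ℝ → ℝ)
    (hψ : ∀ n : ℕ, ∀ x : ℝ, ψ n x =
      (4 : ℝ) ^ (-(a n : ℤ)) * φ ((2 : ℝ) ^ (n + a n + 2) * (x - (2 : ℝ) ^ (-(a n : ℤ)))))
    (m n : ℕ) (hmn : m ≠ n) :
    ¬ ∃ x : ℝ, ψ m x ≠ 0 ∧ ψ n x ≠ 0 := by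
  rintro ⟨x, hm, hn⟩
  have mem_ball_of_ne_zero : ∀ k, ψ k x ≠ 0 →
      x ∈ ball ((2 : ℝ) ^ (-(a k : ℤ))) ((2 : ℝ) ^ (-(a k : ℤ)) / 4) := by
    intro k hk
    rw [hψ] at hk
    exact ball_subset_ball (inv_two_pow_add_add_two_le k (a k))
      (mem_ball_of_apply_mul_sub_ne_zero hφ₂ (by positivity) (right_ne_zero_of_mul hk))
  exact Set.disjoint_left.mp (pairwise_disjoint_ball_two_zpow_neg (hinj.ne hmn))
    (mem_ball_of_ne_zero m hm) (mem_ball_of_ne_zero n hn)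

/-- If m ≠ n then the supports of ψ_m and ψ_n do not intersect. -/
theorem blips_disjoint_support (a : ℕ → ℕ) (ha : Computable a)
    (hinj : Function.Injective a)
    (φ : ℝ → ℝ)
    (hφ₁ : ∀ x : ℝ, |x| < 1 → φ x = Real.exp (-(x ^ 2 / (1 - x ^ 2))))
    (hφ₂ : ∀ x : ℝ, 1 ≤ |x| → φ x = 0)
    (ψ : ℕ → ℝ → ℝ)
    (hψ : ∀ n : ℕ, ∀ x : ℝ, ψ n x =
      (4 : ℝ) ^ (-(a n : ℤ)) * φ ((2 : ℝ) ^ (n + a n + 2) * (x - (2 : ℝ) ^ (-(a n : ℤ)))))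
    (m n : ℕ) (hmn : m ≠ n) :
    ¬ ∃ x : ℝ, ψ m x ≠ 0 ∧ ψ n x ≠ 0 :=
  blips_disjoint_support_general a hinj φ hφ₂ ψ hψ m n hmn
end

section
/- The series Σ_{n=0}^∞ ψ_n(x) converges uniformly on ℝ; its sum f' is a continuous function on ℝ, and f'(x) = 0 for all x ≥ 5/4 and all x ≤ 0. -/
/-!
Since `0 ≤ φ ≤ 1`, the `n`-th blip is bounded by `4 ^ (-a n)`, which is summable because `a` is
injective; the Weierstrass M-test gives uniform convergence, hence continuity of the sum. The
`n`-th blip is supported in `|x - 2 ^ (-a n)| < 2 ^ (-(n + a n + 2))`, which lies inside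
`(0, 5/4)` because `2 ^ (-a n) ≤ 1` and `2 ^ (n + a n + 2) · 2 ^ (-a n) = 2 ^ (n + 2)`.
-/

open Real

section Bump

variable {φ : ℝ → ℝ} (hφ₁ : ∀ x : ℝ, |x| < 1 → φ x = exp (-(x ^ 2 / (1 - x ^ 2))))
  (hφ₂ : ∀ x : ℝ, 1 ≤ |x| → φ x = 0)
include hφ₁ hφ₂

theorem bump_eq_exp_one_mul_expNegInvGlue (x : ℝ) : φ x = exp 1 * expNegInvGlue (1 - x ^ 2) := by
  rcases lt_or_ge |x| 1 with hx | hx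
  · have hpos : 0 < 1 - x ^ 2 := by nlinarith [abs_lt.mp hx]
    rw [hφ₁ x hx, expNegInvGlue, if_neg hpos.not_ge, ← exp_add]
    congr 1
    field_simp
    ring
  · have hx2 : 1 ≤ x ^ 2 := by nlinarith [sq_abs x]
    rw [hφ₂ x hx, expNegInvGlue.zero_of_nonpos (by linarith), mul_zero]

theorem contDiff_bump {n : ℕ∞} : ContDiff ℝ n φ := by
  rw [funext (bump_eq_exp_one_mul_expNegInvGlue hφ₁ hφ₂)]
  exact contDiff_const.mul (expNegInvGlue.contDiff.comp (by fun_prop))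

theorem abs_bump_le_one (x : ℝ) : |φ x| ≤ 1 := by
  rcases lt_or_ge |x| 1 with hx | hx
  · have hpos : 0 < 1 - x ^ 2 := by nlinarith [abs_lt.mp hx]
    rw [hφ₁ x hx, abs_of_pos (exp_pos _), exp_le_one_iff, neg_nonpos]
    positivity
  · rw [hφ₂ x hx, abs_zero]
    exact zero_le_one

end Bump

theorem summable_zpow_neg_comp_of_injective {r : ℝ} (hr : 1 < r) {a : ℕ → ℕ}
    (ha : Function.Injective a) : Summable fun n => r ^ (-(a n : ℤ)) := by
  have hgeom : Summable fun k : ℕ => r⁻¹ ^ k :=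
    summable_geometric_of_lt_one (by positivity) (inv_lt_one_of_one_lt₀ hr)
  refine (hgeom.comp_injective ha).congr fun n => ?_
  simp [zpow_neg, inv_pow]

theorem two_pow_mul_two_zpow_neg (n k : ℕ) :
    (2 : ℝ) ^ (n + k + 2) * 2 ^ (-(k : ℤ)) = 2 ^ (n + 2) := by
  rw [zpow_neg, zpow_natCast, ← div_eq_mul_inv, div_eq_iff (by positivity), ← pow_add]
  ring_nf

theorem one_le_abs_two_pow_mul_sub_of_nonpos (n k : ℕ) {x : ℝ} (hx : x ≤ 0) :
    1 ≤ |(2 : ℝ) ^ (n + k + 2) * (x - 2 ^ (-(k : ℤ)))| := by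
  have hshift :
      (2 : ℝ) ^ (n + k + 2) * (x - 2 ^ (-(k : ℤ))) = 2 ^ (n + k + 2) * x - 2 ^ (n + 2) := by
    rw [mul_sub, two_pow_mul_two_zpow_neg]
  have hscaled : (2 : ℝ) ^ (n + k + 2) * x ≤ 0 :=
    mul_nonpos_of_nonneg_of_nonpos (by positivity) hx
  have hbig : (1 : ℝ) ≤ 2 ^ (n + 2) := one_le_pow₀ one_le_two
  rw [hshift, abs_sub_comm, abs_of_nonneg (by linarith)]
  linarith

theorem one_le_abs_two_pow_mul_sub_of_five_fourths_le (n k : ℕ) {x : ℝ} (hx : 5 / 4 ≤ x) :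
    1 ≤ |(2 : ℝ) ^ (n + k + 2) * (x - 2 ^ (-(k : ℤ)))| := by
  have hcentre : (2 : ℝ) ^ (-(k : ℤ)) ≤ 1 := zpow_le_one_of_nonpos₀ one_le_two (by simp)
  have hscale : (4 : ℝ) ≤ 2 ^ (n + k + 2) :=
    calc (4 : ℝ) = 2 ^ 2 := by norm_num
      _ ≤ 2 ^ (n + k + 2) := pow_le_pow_right₀ one_le_two (by omega)
  calc (1 : ℝ) = 4 * (1 / 4) := by norm_num
    _ ≤ 2 ^ (n + k + 2) * (x - 2 ^ (-(k : ℤ))) :=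
      mul_le_mul hscale (by linarith) (by norm_num) (by positivity)
    _ ≤ _ := le_abs_self _

theorem blip_series_uniform_general (a : ℕ → ℕ)
    (hinj : Function.Injective a)
    (φ : ℝ → ℝ)
    (hφ₁ : ∀ x : ℝ, |x| < 1 → φ x = Real.exp (-(x ^ 2 / (1 - x ^ 2))))
    (hφ₂ : ∀ x : ℝ, 1 ≤ |x| → φ x = 0)
    (ψ : ℕ → ℝ → ℝ)
    (hψ : ∀ n : ℕ, ∀ x : ℝ, ψ n x =
      (4 : ℝ) ^ (-(a n : ℤ)) * φ ((2 : ℝ) ^ (n + a n + 2) * (x - (2 : ℝ) ^ (-(a n : ℤ)))))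
    (f' : ℝ → ℝ) (hf' : ∀ x : ℝ, f' x = ∑' n : ℕ, ψ n x) :
    TendstoUniformly (fun N : ℕ => fun x : ℝ => ∑ n ∈ Finset.range N, ψ n x) f'
        Filter.atTop ∧
      Continuous f' ∧ (∀ x : ℝ, 5 / 4 ≤ x → f' x = 0) ∧ (∀ x : ℝ, x ≤ 0 → f' x = 0) := by
  have hψ_cont (n : ℕ) : Continuous (ψ n) := by
    rw [funext (hψ n)]
    exact continuous_const.mul
      ((contDiff_bump hφ₁ hφ₂ (n := 0)).continuous.comp (by fun_prop))
  have hψ_bound (n : ℕ) (x : ℝ) : ‖ψ n x‖ ≤ (4 : ℝ) ^ (-(a n : ℤ)) := by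
    rw [hψ, norm_mul, Real.norm_of_nonneg (by positivity)]
    exact mul_le_of_le_one_right (by positivity) (abs_bump_le_one hφ₁ hφ₂ _)
  have hf'_zero {x : ℝ}
      (hx : ∀ n, 1 ≤ |(2 : ℝ) ^ (n + a n + 2) * (x - 2 ^ (-(a n : ℤ)))|) : f' x = 0 := by
    rw [hf']
    exact (tsum_congr fun n => by rw [hψ, hφ₂ _ (hx n), mul_zero]).trans tsum_zero
  have htu : TendstoUniformly (fun N : ℕ => fun x : ℝ => ∑ n ∈ Finset.range N, ψ n x) f'
      Filter.atTop := by
    rw [funext hf']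
    exact tendstoUniformly_tsum_nat (summable_zpow_neg_comp_of_injective (by norm_num) hinj)
      hψ_bound
  refine ⟨htu, htu.continuous (Filter.Frequently.of_forall fun N => ?_), ?_, ?_⟩
  · exact continuous_finsetSum _ fun n _ => hψ_cont n
  · exact fun x hx => hf'_zero fun n => one_le_abs_two_pow_mul_sub_of_five_fourths_le n (a n) hx
  · exact fun x hx => hf'_zero fun n => one_le_abs_two_pow_mul_sub_of_nonpos n (a n) hx

/-- Σ ψ_n converges uniformly on ℝ; the sum f' is continuous, and vanishes
for x ≥ 5/4 and for x ≤ 0. -/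
theorem blip_series_uniform (a : ℕ → ℕ) (ha : Computable a)
    (hinj : Function.Injective a)
    (φ : ℝ → ℝ)
    (hφ₁ : ∀ x : ℝ, |x| < 1 → φ x = Real.exp (-(x ^ 2 / (1 - x ^ 2))))
    (hφ₂ : ∀ x : ℝ, 1 ≤ |x| → φ x = 0)
    (ψ : ℕ → ℝ → ℝ)
    (hψ : ∀ n : ℕ, ∀ x : ℝ, ψ n x =
      (4 : ℝ) ^ (-(a n : ℤ)) * φ ((2 : ℝ) ^ (n + a n + 2) * (x - (2 : ℝ) ^ (-(a n : ℤ)))))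
    (f' : ℝ → ℝ) (hf' : ∀ x : ℝ, f' x = ∑' n : ℕ, ψ n x) :
    TendstoUniformly (fun N : ℕ => fun x : ℝ => ∑ n ∈ Finset.range N, ψ n x) f'
        Filter.atTop ∧
      Continuous f' ∧ (∀ x : ℝ, 5 / 4 ≤ x → f' x = 0) ∧ (∀ x : ℝ, x ≤ 0 → f' x = 0) :=
  blip_series_uniform_general a hinj φ hφ₁ hφ₂ ψ hψ f' hf'
end

section
/- For every j ∈ ℕ, f'(2^{−j}) = 4^{−j} if j ∈ A, and f'(2^{−j}) = 0 if j ∉ A. -/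
/-! At `2^{-j}` the argument of `φ` in the `n`-th blip is `2^{n+a(n)+2} (2^{-j} - 2^{-a(n)})`.
It vanishes when `a(n) = j`; otherwise it is `2^p - 2^q` with distinct integers `p, q` and
`max p q ≥ 1`, so it has absolute value at least `1`, where `φ` vanishes. Hence the series has at
most one nonzero term, `4^{-j} φ(0) = 4^{-j}` for the unique `n` with `a(n) = j`. -/

lemma one_le_two_zpow_sub_two_zpow {p q : ℤ} (hqp : q < p) (hp : 1 ≤ p) :
    (1 : ℝ) ≤ 2 ^ p - 2 ^ q := by
  have hq : (2 : ℝ) ^ q ≤ 2 ^ (p - 1) := zpow_le_zpow_right₀ one_le_two (by omega)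
  have hp' : (2 : ℝ) ^ p = 2 * 2 ^ (p - 1) := by
    rw [← zpow_one_add₀ two_ne_zero]; ring_nf
  have h1 : (1 : ℝ) ≤ 2 ^ (p - 1) := one_le_zpow₀ one_le_two (by omega)
  linarith

lemma one_le_abs_two_zpow_sub_two_zpow {p q : ℤ} (hpq : p ≠ q) (h : 1 ≤ max p q) :
    (1 : ℝ) ≤ |2 ^ p - 2 ^ q| := by
  rcases hpq.lt_or_gt with hpq | hqp
  · rw [abs_sub_comm]
    exact (one_le_two_zpow_sub_two_zpow hpq (by omega)).trans (le_abs_self _)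
  · exact (one_le_two_zpow_sub_two_zpow hqp (by omega)).trans (le_abs_self _)

lemma one_le_abs_two_pow_mul_sub_of_ne (n : ℕ) {j m : ℕ} (h : m ≠ j) :
    (1 : ℝ) ≤ |(2 : ℝ) ^ (n + m + 2) * ((2 : ℝ) ^ (-(j : ℤ)) - (2 : ℝ) ^ (-(m : ℤ)))| := by
  rw [← zpow_natCast, mul_sub, ← zpow_add₀ two_ne_zero, ← zpow_add₀ two_ne_zero]
  exact one_le_abs_two_zpow_sub_two_zpow (by omega) (by omega)

theorem blip_series_values_general (a : ℕ → ℕ)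
    (hinj : Function.Injective a)
    (φ : ℝ → ℝ)
    (hφ₁ : ∀ x : ℝ, |x| < 1 → φ x = Real.exp (-(x ^ 2 / (1 - x ^ 2))))
    (hφ₂ : ∀ x : ℝ, 1 ≤ |x| → φ x = 0)
    (ψ : ℕ → ℝ → ℝ)
    (hψ : ∀ n : ℕ, ∀ x : ℝ, ψ n x =
      (4 : ℝ) ^ (-(a n : ℤ)) * φ ((2 : ℝ) ^ (n + a n + 2) * (x - (2 : ℝ) ^ (-(a n : ℤ)))))
    (f' : ℝ → ℝ) (hf' : ∀ x : ℝ, f' x = ∑' n : ℕ, ψ n x) :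
    ∀ j : ℕ,
      (j ∈ Set.range a → f' ((2 : ℝ) ^ (-(j : ℤ))) = (4 : ℝ) ^ (-(j : ℤ))) ∧
      (j ∉ Set.range a → f' ((2 : ℝ) ^ (-(j : ℤ))) = 0) := by
  intro j
  have hφ₀ : φ 0 = 1 := by simp [hφ₁ 0 (by norm_num)]
  have hψ_off : ∀ n, a n ≠ j → ψ n ((2 : ℝ) ^ (-(j : ℤ))) = 0 := fun n hn => by
    rw [hψ, hφ₂ _ (one_le_abs_two_pow_mul_sub_of_ne n hn), mul_zero]
  refine ⟨?_, fun hj => ?_⟩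
  · rintro ⟨m, rfl⟩
    rw [hf', tsum_eq_single m fun n hn => hψ_off n (hinj.ne hn), hψ, sub_self, mul_zero, hφ₀,
      mul_one]
  · rw [hf', tsum_congr fun n => hψ_off n fun h => hj ⟨n, h⟩, tsum_zero]

/-- For every j : f'(2^{−j}) = 4^{−j} if j ∈ A, and f'(2^{−j}) = 0 if j ∉ A. -/
theorem blip_series_values (a : ℕ → ℕ) (ha : Computable a)
    (hinj : Function.Injective a)
    (φ : ℝ → ℝ)
    (hφ₁ : ∀ x : ℝ, |x| < 1 → φ x = Real.exp (-(x ^ 2 / (1 - x ^ 2))))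
    (hφ₂ : ∀ x : ℝ, 1 ≤ |x| → φ x = 0)
    (ψ : ℕ → ℝ → ℝ)
    (hψ : ∀ n : ℕ, ∀ x : ℝ, ψ n x =
      (4 : ℝ) ^ (-(a n : ℤ)) * φ ((2 : ℝ) ^ (n + a n + 2) * (x - (2 : ℝ) ^ (-(a n : ℤ)))))
    (f' : ℝ → ℝ) (hf' : ∀ x : ℝ, f' x = ∑' n : ℕ, ψ n x) :
    ∀ j : ℕ,
      (j ∈ Set.range a → f' ((2 : ℝ) ^ (-(j : ℤ))) = (4 : ℝ) ^ (-(j : ℤ))) ∧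
      (j ∉ Set.range a → f' ((2 : ℝ) ^ (-(j : ℤ))) = 0) :=
  blip_series_values_general a hinj φ hφ₁ hφ₂ ψ hψ f' hf'
end

section
/- The series Σ_{n=0}^∞ Φ_n(x) converges uniformly on ℝ; its sum f satisfies 0 ≤ f(x) ≤ 2 for all x ∈ ℝ, and f is differentiable everywhere with derivative f'(x) = Σ_{n=0}^∞ ψ_n(x) at every point x ∈ ℝ. -/
/-!
Up to the factor `e`, `φ x = expNegInvGlue (1 - x²)`, so `φ` is continuous with values in
`[0, 1]` and vanishes off `(-1, 1)`. Hence `ψ n` is continuous, bounded by `4^(-a n)` and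
supported in an interval of length `2^(-(n + a n + 1))` inside `[0, ∞)`, so its primitive `Φ n`
is monotone with values in `[0, 2^(-n)]`. The Weierstrass M-test with the bounds `2^(-n)` gives
uniform convergence and `0 ≤ f ≤ ∑ 2^(-n) = 2`; since `a` is injective, `∑ 4^(-a n)` converges,
which dominates the series of derivatives `∑ ψ n` and lets us differentiate term by term.
-/

open MeasureTheory intervalIntegral Real Set

theorem eq_exp_one_mul_expNegInvGlue {φ : ℝ → ℝ}
    (hφ₁ : ∀ x : ℝ, |x| < 1 → φ x = exp (-(x ^ 2 / (1 - x ^ 2))))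
    (hφ₂ : ∀ x : ℝ, 1 ≤ |x| → φ x = 0) (x : ℝ) :
    φ x = exp 1 * expNegInvGlue (1 - x ^ 2) := by
  rcases lt_or_ge |x| 1 with hx | hx
  · have hx2 : 0 < 1 - x ^ 2 := by nlinarith [sq_abs x, abs_nonneg x]
    -- `-x²/(1-x²) = 1 - 1/(1-x²)`
    rw [hφ₁ x hx, expNegInvGlue, if_neg hx2.not_ge, ← exp_add]
    congr 1
    field_simp
    ring
  · rw [hφ₂ x hx, expNegInvGlue.zero_of_nonpos (by nlinarith [sq_abs x]), mul_zero]

theorem continuous_of_eq_exp_on_abs_lt_one {φ : ℝ → ℝ}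
    (hφ₁ : ∀ x : ℝ, |x| < 1 → φ x = exp (-(x ^ 2 / (1 - x ^ 2))))
    (hφ₂ : ∀ x : ℝ, 1 ≤ |x| → φ x = 0) : Continuous φ := by
  rw [funext (eq_exp_one_mul_expNegInvGlue hφ₁ hφ₂)]
  fun_prop

theorem nonneg_of_eq_exp_on_abs_lt_one {φ : ℝ → ℝ}
    (hφ₁ : ∀ x : ℝ, |x| < 1 → φ x = exp (-(x ^ 2 / (1 - x ^ 2))))
    (hφ₂ : ∀ x : ℝ, 1 ≤ |x| → φ x = 0) (x : ℝ) : 0 ≤ φ x := by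
  rcases lt_or_ge |x| 1 with hx | hx
  · exact (hφ₁ x hx).symm ▸ (exp_pos _).le
  · exact (hφ₂ x hx).ge

theorem le_one_of_eq_exp_on_abs_lt_one {φ : ℝ → ℝ}
    (hφ₁ : ∀ x : ℝ, |x| < 1 → φ x = exp (-(x ^ 2 / (1 - x ^ 2))))
    (hφ₂ : ∀ x : ℝ, 1 ≤ |x| → φ x = 0) (x : ℝ) : φ x ≤ 1 := by
  rcases lt_or_ge |x| 1 with hx | hx
  · have hx2 : 0 < 1 - x ^ 2 := by nlinarith [sq_abs x, abs_nonneg x]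
    rw [hφ₁ x hx, exp_le_one_iff, neg_nonpos]
    positivity
  · exact (hφ₂ x hx).trans_le zero_le_one

theorem integral_mem_Icc_of_eq_zero_off_Ioo {g : ℝ → ℝ} {M p q : ℝ} (hg : Continuous g)
    (hg0 : ∀ t, 0 ≤ g t) (hgM : ∀ t, g t ≤ M) (hp : 0 ≤ p) (hpq : p ≤ q)
    (hout : ∀ t, t ∉ Ioo p q → g t = 0) (x : ℝ) :
    ∫ t in (0 : ℝ)..x, g t ∈ Icc 0 (M * (q - p)) := by
  set G : ℝ → ℝ := fun y => ∫ t in (0 : ℝ)..y, g t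
  have hG_sub : ∀ y z, G z - G y = ∫ t in y..z, g t := fun y z =>
    integral_interval_sub_left (hg.intervalIntegrable _ _) (hg.intervalIntegrable _ _)
  have hG_deriv : ∀ y, HasDerivAt G (g y) y := fun y =>
    (hg.integral_hasStrictDerivAt 0 y).hasDerivAt
  have hG_mono : Monotone G := monotone_of_deriv_nonneg
    (fun y => (hG_deriv y).differentiableAt) fun y => (hG_deriv y).deriv ▸ hg0 y
  have hG_const : ∀ y z, (∀ t ∈ uIcc y z, t ∉ Ioo p q) → G z = G y := by
    intro y z h
    rw [← sub_eq_zero, hG_sub, integral_congr fun t ht => hout t (h t ht),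
      intervalIntegral.integral_zero]
  have hGp : G p = 0 := (hG_const 0 p fun t ht h => by
    rw [uIcc_of_le hp] at ht; exact ht.2.not_gt h.1).trans integral_same
  have hGq : G q ≤ M * (q - p) := by
    have := norm_integral_le_of_norm_le_const (a := p) (b := q) (f := g) fun t _ => by
      rw [norm_of_nonneg (hg0 t)]; exact hgM t
    rw [← hG_sub, hGp, sub_zero, abs_of_nonneg (sub_nonneg.2 hpq)] at this
    exact (le_abs_self _).trans this
  have hG_left : G (min x p) = G p := hG_const p (min x p) fun t ht h => by
    rw [uIcc_of_ge (min_le_right x p)] at ht; exact ht.2.not_gt h.1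
  have hG_right : G (max x q) = G q := hG_const q (max x q) fun t ht h => by
    rw [uIcc_of_le (le_max_right x q)] at ht; exact ht.1.not_gt h.2
  constructor
  · calc 0 = G (min x p) := by rw [hG_left, hGp]
      _ ≤ G x := hG_mono (min_le_left x p)
  · calc G x ≤ G (max x q) := hG_mono (le_max_left x q)
      _ ≤ M * (q - p) := hG_right ▸ hGq

theorem integral_scaled_bump_mem_Icc {φ : ℝ → ℝ} (hφc : Continuous φ) (hφ0 : ∀ x, 0 ≤ φ x)
    (hφ1 : ∀ x, φ x ≤ 1) (hφ₂ : ∀ x : ℝ, 1 ≤ |x| → φ x = 0) {M s c : ℝ} (hM : 0 ≤ M)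
    (hs : 0 < s) (hsc : s⁻¹ ≤ c) (x : ℝ) :
    ∫ t in (0 : ℝ)..x, M * φ (s * (t - c)) ∈ Icc 0 (M * (2 * s⁻¹)) := by
  have hout : ∀ t, t ∉ Ioo (c - s⁻¹) (c + s⁻¹) → M * φ (s * (t - c)) = 0 := by
    intro t ht
    have hst : s⁻¹ ≤ |t - c| := by
      rw [mem_Ioo, not_and_or, not_lt, not_lt] at ht
      rcases ht with ht | ht
      · exact le_abs.2 (Or.inr (by linarith))
      · exact le_abs.2 (Or.inl (by linarith))
    rw [hφ₂, mul_zero]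
    rwa [abs_mul, abs_of_pos hs, ← inv_le_iff_one_le_mul₀' hs]
  convert integral_mem_Icc_of_eq_zero_off_Ioo (g := fun t => M * φ (s * (t - c))) (by fun_prop)
    (fun t => mul_nonneg hM (hφ0 _)) (fun t => mul_le_of_le_one_right hM (hφ1 _)) (sub_nonneg.2 hsc)
    (by linarith [inv_pos.2 hs]) hout x using 3
  ring

theorem two_pow_inv_le_two_zpow_neg (n k : ℕ) :
    ((2 : ℝ) ^ (n + k + 2))⁻¹ ≤ (2 : ℝ) ^ (-(k : ℤ)) := by
  rw [zpow_neg, zpow_natCast]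
  exact inv_anti₀ (by positivity) (pow_le_pow_right₀ one_le_two (by omega))

theorem four_zpow_neg_mul_le (n k : ℕ) :
    (4 : ℝ) ^ (-(k : ℤ)) * (2 * ((2 : ℝ) ^ (n + k + 2))⁻¹) ≤ (1 / 2) ^ n := by
  have hM : ((4 : ℝ) ^ k)⁻¹ ≤ 1 := inv_le_one_of_one_le₀ (one_le_pow₀ (by norm_num))
  have hw : 2 * ((2 : ℝ) ^ (n + k + 2))⁻¹ ≤ (2 ^ n)⁻¹ := by
    rw [pow_add, pow_add, mul_inv, mul_inv]
    have : ((2 : ℝ) ^ k)⁻¹ ≤ 1 := inv_le_one_of_one_le₀ (one_le_pow₀ one_le_two)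
    have : (0 : ℝ) < (2 ^ n)⁻¹ := by positivity
    nlinarith
  rw [zpow_neg, zpow_natCast, one_div, inv_pow]
  simpa using mul_le_mul hM hw (by positivity) zero_le_one

theorem summable_four_zpow_neg_comp {a : ℕ → ℕ} (ha : Function.Injective a) :
    Summable fun n => (4 : ℝ) ^ (-(a n : ℤ)) := by
  simp_rw [zpow_neg, zpow_natCast, ← inv_pow]
  exact (summable_geometric_of_lt_one (by norm_num) (by norm_num)).comp_injective ha

theorem integrated_blip_series_general (a : ℕ → ℕ)
    (hinj : Function.Injective a)
    (φ : ℝ → ℝ)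
    (hφ₁ : ∀ x : ℝ, |x| < 1 → φ x = Real.exp (-(x ^ 2 / (1 - x ^ 2))))
    (hφ₂ : ∀ x : ℝ, 1 ≤ |x| → φ x = 0)
    (ψ : ℕ → ℝ → ℝ)
    (hψ : ∀ n : ℕ, ∀ x : ℝ, ψ n x =
      (4 : ℝ) ^ (-(a n : ℤ)) * φ ((2 : ℝ) ^ (n + a n + 2) * (x - (2 : ℝ) ^ (-(a n : ℤ)))))
    (Φ : ℕ → ℝ → ℝ) (hΦ : ∀ n : ℕ, ∀ x : ℝ, Φ n x = ∫ t in (0 : ℝ)..x, ψ n t)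
    (f' : ℝ → ℝ) (hf' : ∀ x : ℝ, f' x = ∑' n : ℕ, ψ n x)
    (f : ℝ → ℝ) (hf : ∀ x : ℝ, f x = ∑' n : ℕ, Φ n x) :
    TendstoUniformly (fun N : ℕ => fun x : ℝ => ∑ n ∈ Finset.range N, Φ n x) f
        Filter.atTop ∧
      (∀ x : ℝ, 0 ≤ f x ∧ f x ≤ 2) ∧ (∀ x : ℝ, HasDerivAt f (f' x) x) := by
  have hφc := continuous_of_eq_exp_on_abs_lt_one hφ₁ hφ₂
  have hφ0 := nonneg_of_eq_exp_on_abs_lt_one hφ₁ hφ₂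
  have hφ1 := le_one_of_eq_exp_on_abs_lt_one hφ₁ hφ₂
  have hM : ∀ n, (0 : ℝ) ≤ 4 ^ (-(a n : ℤ)) := fun n => by positivity
  have hψ_norm : ∀ n x, ‖ψ n x‖ ≤ (4 : ℝ) ^ (-(a n : ℤ)) := fun n x => by
    rw [hψ, norm_of_nonneg (mul_nonneg (hM n) (hφ0 _))]
    exact mul_le_of_le_one_right (hM n) (hφ1 _)
  have hΦ_mem : ∀ n x, Φ n x ∈ Icc 0 ((1 / 2 : ℝ) ^ n) := fun n x => by
    obtain ⟨h0, h1⟩ := integral_scaled_bump_mem_Icc hφc hφ0 hφ1 hφ₂ (hM n) (by positivity)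
      (two_pow_inv_le_two_zpow_neg n (a n)) x
    rw [hΦ, funext (hψ n)]
    exact ⟨h0, h1.trans (four_zpow_neg_mul_le n (a n))⟩
  have hΦ_norm : ∀ n x, ‖Φ n x‖ ≤ (1 / 2 : ℝ) ^ n := fun n x =>
    (norm_of_nonneg (hΦ_mem n x).1).trans_le (hΦ_mem n x).2
  have hψ_cont : ∀ n, Continuous (ψ n) := fun n => by
    rw [funext (hψ n)]
    fun_prop
  have hΦ_deriv : ∀ n x, HasDerivAt (Φ n) (ψ n x) x := fun n x => by
    rw [funext (hΦ n)]
    exact ((hψ_cont n).integral_hasStrictDerivAt 0 x).hasDerivAt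
  have hΦ_zero : ∀ n, Φ n 0 = 0 := fun n => (hΦ n 0).trans integral_same
  rw [funext hf]
  refine ⟨tendstoUniformly_tsum_nat summable_geometric_two hΦ_norm, fun x => ⟨?_, ?_⟩,
    fun x => ?_⟩
  · exact tsum_nonneg fun n => (hΦ_mem n x).1
  · exact tsum_geometric_two ▸ Summable.tsum_le_tsum (fun n => (hΦ_mem n x).2)
      (summable_geometric_two.of_norm_bounded (hΦ_norm · x)) summable_geometric_two
  · rw [hf']
    exact hasDerivAt_tsum (y₀ := 0) (summable_four_zpow_neg_comp hinj) hΦ_deriv hψ_norm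
      (by simp [hΦ_zero]) x

/-- Σ Φ_n converges uniformly on ℝ; the sum f satisfies 0 ≤ f ≤ 2 and f is
differentiable everywhere with derivative f'(x) = Σ ψ_n(x). -/
theorem integrated_blip_series (a : ℕ → ℕ) (ha : Computable a)
    (hinj : Function.Injective a)
    (φ : ℝ → ℝ)
    (hφ₁ : ∀ x : ℝ, |x| < 1 → φ x = Real.exp (-(x ^ 2 / (1 - x ^ 2))))
    (hφ₂ : ∀ x : ℝ, 1 ≤ |x| → φ x = 0)
    (ψ : ℕ → ℝ → ℝ)
    (hψ : ∀ n : ℕ, ∀ x : ℝ, ψ n x =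
      (4 : ℝ) ^ (-(a n : ℤ)) * φ ((2 : ℝ) ^ (n + a n + 2) * (x - (2 : ℝ) ^ (-(a n : ℤ)))))
    (Φ : ℕ → ℝ → ℝ) (hΦ : ∀ n : ℕ, ∀ x : ℝ, Φ n x = ∫ t in (0 : ℝ)..x, ψ n t)
    (f' : ℝ → ℝ) (hf' : ∀ x : ℝ, f' x = ∑' n : ℕ, ψ n x)
    (f : ℝ → ℝ) (hf : ∀ x : ℝ, f x = ∑' n : ℕ, Φ n x) :
    TendstoUniformly (fun N : ℕ => fun x : ℝ => ∑ n ∈ Finset.range N, Φ n x) f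
        Filter.atTop ∧
      (∀ x : ℝ, 0 ≤ f x ∧ f x ≤ 2) ∧ (∀ x : ℝ, HasDerivAt f (f' x) x) :=
  integrated_blip_series_general a hinj φ hφ₁ hφ₂ ψ hψ Φ hΦ f' hf' f hf
end

section
/- For j ∈ A, the function f_j defined by f_j(x) = f(x) − Φ_{ν(j)}(x) satisfies: f_j is differentiable at 2^{−j} with derivative 0 there, and 0 ≤ f(x) − f_j(x) ≤ 2^{−ν(j)} for all x ∈ ℝ (so the uniform distance between f and f_j is at most 2^{−ν(j)}). -/
/-!
Each `Φ n` is the primitive, from `0`, of a nonnegative blip of height `4 ^ (-a n)` and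
half-width `2 ^ (-(n + a n + 2))`, centred at `2 ^ (-a n)` and supported to the right of `0`; hence
`0 ≤ Φ n ≤ 2 ^ (-n)` and the series for `f` converges. Distinct dyadic centres `2 ^ (-k)` are a factor
of at least two apart while the blips are at most a quarter of their centre wide, so on
`(3/4 · 2 ^ (-j), 5/4 · 2 ^ (-j))` all blips but the `ν j`-th vanish. There every other `Φ n` is
constant, so `f - Φ (ν j)` is locally constant at `2 ^ (-j)`.
-/

open MeasureTheory Set Filter Topology

section Primitive

variable {g : ℝ → ℝ}

theorem integral_eq_of_eqOn_zero (hg : ∀ u v, IntervalIntegrable g volume u v) {s : Set ℝ}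
    (hs : s.OrdConnected) (h0 : EqOn g 0 s) {x y : ℝ} (hx : x ∈ s) (hy : y ∈ s) :
    ∫ t in 0..x, g t = ∫ t in 0..y, g t := by
  rw [← sub_eq_zero, intervalIntegral.integral_interval_sub_left (hg 0 x) (hg 0 y),
    intervalIntegral.integral_congr (h0.mono (hs.uIcc_subset hy hx))]
  simp

theorem monotone_integral_of_nonneg (hg : ∀ u v, IntervalIntegrable g volume u v)
    (h0 : ∀ t, 0 ≤ g t) : Monotone fun x => ∫ t in 0..x, g t := fun x y hxy => by
  have hsub := intervalIntegral.integral_interval_sub_left (hg 0 y) (hg 0 x)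
  have hnonneg : 0 ≤ ∫ t in x..y, g t := intervalIntegral.integral_nonneg hxy fun t _ => h0 t
  dsimp only
  linarith

theorem integral_mem_Icc_of_eq_zero_of_le_abs (hg : ∀ u v, IntervalIntegrable g volume u v)
    (h0 : ∀ t, 0 ≤ g t) {M : ℝ} (hM : ∀ t, g t ≤ M) {c r : ℝ} (hr : 0 ≤ r) (hrc : r ≤ c)
    (hsupp : ∀ t, r ≤ |t - c| → g t = 0) (x : ℝ) :
    ∫ t in 0..x, g t ∈ Icc 0 (2 * r * M) := by
  set F := fun x => ∫ t in 0..x, g t with hF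
  have hmono : Monotone F := monotone_integral_of_nonneg hg h0
  have hleft : ∀ x ≤ c - r, F x = 0 := fun x hx => by
    refine (integral_eq_of_eqOn_zero hg ordConnected_Iic (fun t ht => hsupp t ?_) hx
      (show (0 : ℝ) ≤ c - r by linarith)).trans intervalIntegral.integral_same
    exact (show r ≤ -(t - c) by linarith [mem_Iic.mp ht]).trans (neg_le_abs _)
  have hright : ∀ x, c + r ≤ x → F x = F (c + r) := fun x hx =>
    integral_eq_of_eqOn_zero hg ordConnected_Ici
      (fun t ht => hsupp t ((show r ≤ t - c by linarith [mem_Ici.mp ht]).trans (le_abs_self _)))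
      hx (mem_Ici.mpr le_rfl)
  have htop : F (c + r) ≤ 2 * r * M := calc
    F (c + r) = ∫ t in (c - r)..(c + r), g t := by
      rw [← sub_zero (F (c + r)), ← hleft (c - r) le_rfl, hF,
        intervalIntegral.integral_interval_sub_left (hg _ _) (hg _ _)]
    _ ≤ ∫ _ in (c - r)..(c + r), M :=
      intervalIntegral.integral_mono_on (by linarith) (hg _ _) intervalIntegrable_const
        fun t _ => hM t
    _ = 2 * r * M := by rw [intervalIntegral.integral_const, smul_eq_mul]; ring
  constructor
  · rcases le_total x (c - r) with hx | hx
    · exact (hleft x hx).ge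
    · exact (hleft _ le_rfl).symm.le.trans (hmono hx)
  · rcases le_total x (c + r) with hx | hx
    · exact (hmono hx).trans htop
    · exact (hright x hx).le.trans htop

end Primitive

section Blip

variable {φ : ℝ → ℝ} {H s c : ℝ}

theorem blip_eq_zero (hφ : ∀ y, 1 ≤ |y| → φ y = 0) (hs : 0 < s) {t : ℝ}
    (ht : s⁻¹ ≤ |t - c|) : H * φ (s * (t - c)) = 0 := by
  rw [hφ, mul_zero]
  rwa [abs_mul, abs_of_pos hs, ← inv_mul_le_iff₀ hs, mul_one]

theorem intervalIntegrable_blip (hφm : Measurable φ) (hφ0 : ∀ y, 0 ≤ φ y)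
    (hφ1 : ∀ y, φ y ≤ 1) (hH : 0 ≤ H) (u v : ℝ) :
    IntervalIntegrable (fun t => H * φ (s * (t - c))) volume u v :=
  intervalIntegrable_const.mono_fun' (by fun_prop : Measurable _).aestronglyMeasurable
    (ae_of_all _ fun t => by
      dsimp only
      rw [Real.norm_eq_abs, abs_of_nonneg (mul_nonneg hH (hφ0 _))]
      exact mul_le_of_le_one_right hH (hφ1 _))

theorem integral_blip_mem_Icc (hφm : Measurable φ) (hφ0 : ∀ y, 0 ≤ φ y)
    (hφ1 : ∀ y, φ y ≤ 1) (hφ : ∀ y, 1 ≤ |y| → φ y = 0) (hH : 0 ≤ H) (hs : 0 < s)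
    (hsc : s⁻¹ ≤ c) (x : ℝ) :
    ∫ t in 0..x, H * φ (s * (t - c)) ∈ Icc 0 (2 * s⁻¹ * H) :=
  integral_mem_Icc_of_eq_zero_of_le_abs (intervalIntegrable_blip hφm hφ0 hφ1 hH)
    (fun _ => mul_nonneg hH (hφ0 _)) (fun _ => mul_le_of_le_one_right hH (hφ1 _))
    (inv_pos.mpr hs).le hsc (fun _ => blip_eq_zero hφ hs) x

end Blip

noncomputable def expBump (x : ℝ) : ℝ :=
  if |x| < 1 then Real.exp (-(x ^ 2 / (1 - x ^ 2))) else 0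

theorem expBump_nonneg (x : ℝ) : 0 ≤ expBump x := by
  unfold expBump
  split_ifs <;> positivity

theorem expBump_le_one (x : ℝ) : expBump x ≤ 1 := by
  unfold expBump
  split_ifs with h
  · have hx2 : x ^ 2 < 1 := by rwa [sq_lt_one_iff_abs_lt_one]
    rw [Real.exp_le_one_iff, neg_nonpos]
    exact div_nonneg (sq_nonneg x) (by linarith)
  · exact zero_le_one

theorem expBump_eq_zero {x : ℝ} (hx : 1 ≤ |x|) : expBump x = 0 :=
  if_neg hx.not_gt

theorem measurable_expBump : Measurable expBump :=
  Measurable.ite (measurableSet_lt (by fun_prop) measurable_const) (by fun_prop) measurable_const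

theorem eq_expBump {φ : ℝ → ℝ} (h₁ : ∀ x : ℝ, |x| < 1 → φ x = Real.exp (-(x ^ 2 / (1 - x ^ 2))))
    (h₂ : ∀ x : ℝ, 1 ≤ |x| → φ x = 0) : φ = expBump :=
  funext fun x => by
    by_cases hx : |x| < 1
    · rw [h₁ x hx, expBump, if_pos hx]
    · rw [h₂ x (not_lt.mp hx), expBump_eq_zero (not_lt.mp hx)]

theorem inv_two_pow_add_le (n k : ℕ) : ((2 : ℝ) ^ (n + k + 2))⁻¹ ≤ (2 : ℝ) ^ (-(k : ℤ)) / 4 := by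
  rw [zpow_neg, zpow_natCast, div_eq_mul_inv, ← mul_inv]
  gcongr
  calc (2 : ℝ) ^ k * 4 = 1 * 2 ^ k * 2 ^ 2 := by ring
    _ ≤ 2 ^ n * 2 ^ k * 2 ^ 2 := by gcongr; exact one_le_pow₀ one_le_two
    _ = 2 ^ (n + k + 2) := by rw [pow_add, pow_add]

theorem two_mul_inv_two_pow_add_mul_le (n k : ℕ) :
    2 * ((2 : ℝ) ^ (n + k + 2))⁻¹ * (4 : ℝ) ^ (-(k : ℤ)) ≤ (2 : ℝ) ^ (-(n : ℤ)) := by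
  have h4 : (1 : ℝ) ≤ 4 ^ k := one_le_pow₀ (by norm_num)
  have h2 : (1 : ℝ) ≤ 2 ^ k := one_le_pow₀ one_le_two
  rw [zpow_neg, zpow_neg, zpow_natCast, zpow_natCast, pow_add, pow_add]
  field_simp
  nlinarith

theorem div_four_le_abs_sub_two_zpow {k j : ℤ} (hkj : k ≠ j) {t : ℝ}
    (ht : t ∈ Ioo (3 / 4 * (2 : ℝ) ^ (-j)) (5 / 4 * (2 : ℝ) ^ (-j))) :
    (2 : ℝ) ^ (-k) / 4 ≤ |t - (2 : ℝ) ^ (-k)| := by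
  have hq : (0 : ℝ) < 2 ^ (-k) := by positivity
  obtain ⟨ht₁, ht₂⟩ := ht
  rcases hkj.lt_or_gt with hlt | hgt
  · have h2p : 2 ^ (-j) * 2 ≤ (2 : ℝ) ^ (-k) := by
      rw [← zpow_add_one₀ two_ne_zero]
      exact zpow_le_zpow_right₀ one_le_two (by omega)
    rw [abs_sub_comm]
    exact le_trans (by linarith) (le_abs_self _)
  · have h2q : 2 ^ (-k) * 2 ≤ (2 : ℝ) ^ (-j) := by
      rw [← zpow_add_one₀ two_ne_zero]
      exact zpow_le_zpow_right₀ one_le_two (by omega)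
    exact le_trans (by linarith) (le_abs_self _)

noncomputable def dyadicBlip (n k : ℕ) (x : ℝ) : ℝ :=
  (4 : ℝ) ^ (-(k : ℤ)) * expBump ((2 : ℝ) ^ (n + k + 2) * (x - (2 : ℝ) ^ (-(k : ℤ))))

theorem intervalIntegrable_dyadicBlip (n k : ℕ) (u v : ℝ) :
    IntervalIntegrable (dyadicBlip n k) volume u v :=
  intervalIntegrable_blip measurable_expBump expBump_nonneg expBump_le_one
    (zpow_nonneg zero_le_four _) u v

theorem integral_dyadicBlip_mem_Icc (n k : ℕ) (x : ℝ) :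
    ∫ t in 0..x, dyadicBlip n k t ∈ Icc 0 ((2 : ℝ) ^ (-(n : ℤ))) := by
  obtain ⟨h0, h1⟩ := integral_blip_mem_Icc measurable_expBump expBump_nonneg expBump_le_one
    (fun _ => expBump_eq_zero) (zpow_nonneg zero_le_four _) (by positivity)
    ((inv_two_pow_add_le n k).trans (div_le_self (by positivity) (by norm_num))) x
  exact ⟨h0, h1.trans (two_mul_inv_two_pow_add_mul_le n k)⟩

theorem dyadicBlip_eq_zero_of_ne {n k j : ℕ} (hkj : k ≠ j) {t : ℝ}
    (ht : t ∈ Ioo (3 / 4 * (2 : ℝ) ^ (-(j : ℤ))) (5 / 4 * (2 : ℝ) ^ (-(j : ℤ)))) :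
    dyadicBlip n k t = 0 :=
  blip_eq_zero (fun _ => expBump_eq_zero) (by positivity)
    ((inv_two_pow_add_le n k).trans (div_four_le_abs_sub_two_zpow (by exact_mod_cast hkj) ht))

theorem tsum_sub_eq_of_forall_ne {ι α : Type*} [DecidableEq ι] [AddCommGroup α]
    [TopologicalSpace α] [IsTopologicalAddGroup α] [T2Space α] {F G : ι → α}
    (hF : Summable F) (hG : Summable G) {m : ι} (h : ∀ n ≠ m, F n = G n) :
    ∑' n, F n - F m = ∑' n, G n - G m := by
  rw [hF.tsum_eq_add_tsum_ite m, hG.tsum_eq_add_tsum_ite m, add_sub_cancel_left,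
    add_sub_cancel_left]
  exact tsum_congr fun n => by split_ifs with hn; exacts [rfl, h n hn]

theorem perturbed_function_general (a : ℕ → ℕ)
    (hinj : Function.Injective a)
    (φ : ℝ → ℝ)
    (hφ₁ : ∀ x : ℝ, |x| < 1 → φ x = Real.exp (-(x ^ 2 / (1 - x ^ 2))))
    (hφ₂ : ∀ x : ℝ, 1 ≤ |x| → φ x = 0)
    (ψ : ℕ → ℝ → ℝ)
    (hψ : ∀ n : ℕ, ∀ x : ℝ, ψ n x =
      (4 : ℝ) ^ (-(a n : ℤ)) * φ ((2 : ℝ) ^ (n + a n + 2) * (x - (2 : ℝ) ^ (-(a n : ℤ)))))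
    (Φ : ℕ → ℝ → ℝ) (hΦ : ∀ n : ℕ, ∀ x : ℝ, Φ n x = ∫ t in (0 : ℝ)..x, ψ n t)
    (f : ℝ → ℝ) (hf : ∀ x : ℝ, f x = ∑' n : ℕ, Φ n x)
    (j : ℕ) (hj : ∃ n : ℕ, a n = j)
    (fj : ℝ → ℝ) (hfj : ∀ x : ℝ, fj x = f x - Φ (Nat.find hj) x) :
    HasDerivAt fj 0 ((2 : ℝ) ^ (-(j : ℤ))) ∧
      ∀ x : ℝ, 0 ≤ f x - fj x ∧ f x - fj x ≤ (2 : ℝ) ^ (-(Nat.find hj : ℤ)) := by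
  obtain rfl := eq_expBump hφ₁ hφ₂
  have hΦ_blip (n : ℕ) (x : ℝ) : Φ n x = ∫ t in 0..x, dyadicBlip n (a n) t := by
    simp only [hΦ, hψ, dyadicBlip]
  have hΦ_mem (n : ℕ) (x : ℝ) : Φ n x ∈ Icc 0 ((2 : ℝ) ^ (-(n : ℤ))) :=
    hΦ_blip n x ▸ integral_dyadicBlip_mem_Icc n (a n) x
  have hsum (x : ℝ) : Summable fun n => Φ n x :=
    summable_geometric_two.of_nonneg_of_le (fun n => (hΦ_mem n x).1)
      fun n => (hΦ_mem n x).2.trans_eq (by rw [zpow_neg, zpow_natCast, one_div, inv_pow])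
  set m := Nat.find hj
  refine ⟨?_, fun x => by rw [hfj, sub_sub_cancel]; exact hΦ_mem m x⟩
  set p := (2 : ℝ) ^ (-(j : ℤ))
  have hp : p ∈ Ioo (3 / 4 * p) (5 / 4 * p) := by
    have : 0 < p := by positivity
    constructor <;> linarith
  have hΦ_const (n : ℕ) (hn : n ≠ m) (x : ℝ) (hx : x ∈ Ioo (3 / 4 * p) (5 / 4 * p)) :
      Φ n x = Φ n p := by
    have hnj : a n ≠ j := fun h => hn (hinj (h.trans (Nat.find_spec hj).symm))
    rw [hΦ_blip, hΦ_blip]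
    exact integral_eq_of_eqOn_zero (intervalIntegrable_dyadicBlip n (a n)) ordConnected_Ioo
      (fun t ht => dyadicBlip_eq_zero_of_ne hnj ht) hx hp
  have hfj_const : fj =ᶠ[𝓝 p] fun _ => fj p := by
    filter_upwards [Ioo_mem_nhds hp.1 hp.2] with x hx
    rw [hfj, hfj, hf, hf]
    exact tsum_sub_eq_of_forall_ne (hsum x) (hsum p) fun n hn => hΦ_const n hn x hx
  exact (hasDerivAt_const p (fj p)).congr_of_eventuallyEq hfj_const

/-- For j ∈ A, the function f_j(x) = f(x) − Φ_{ν(j)}(x) has derivative 0 at 2^{−j},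
and 0 ≤ f(x) − f_j(x) ≤ 2^{−ν(j)} for all x. -/
theorem perturbed_function (a : ℕ → ℕ) (ha : Computable a)
    (hinj : Function.Injective a)
    (φ : ℝ → ℝ)
    (hφ₁ : ∀ x : ℝ, |x| < 1 → φ x = Real.exp (-(x ^ 2 / (1 - x ^ 2))))
    (hφ₂ : ∀ x : ℝ, 1 ≤ |x| → φ x = 0)
    (ψ : ℕ → ℝ → ℝ)
    (hψ : ∀ n : ℕ, ∀ x : ℝ, ψ n x =
      (4 : ℝ) ^ (-(a n : ℤ)) * φ ((2 : ℝ) ^ (n + a n + 2) * (x - (2 : ℝ) ^ (-(a n : ℤ)))))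
    (Φ : ℕ → ℝ → ℝ) (hΦ : ∀ n : ℕ, ∀ x : ℝ, Φ n x = ∫ t in (0 : ℝ)..x, ψ n t)
    (f : ℝ → ℝ) (hf : ∀ x : ℝ, f x = ∑' n : ℕ, Φ n x)
    (j : ℕ) (hj : ∃ n : ℕ, a n = j)
    (fj : ℝ → ℝ) (hfj : ∀ x : ℝ, fj x = f x - Φ (Nat.find hj) x) :
    HasDerivAt fj 0 ((2 : ℝ) ^ (-(j : ℤ))) ∧
      ∀ x : ℝ, 0 ≤ f x - fj x ∧ f x - fj x ≤ (2 : ℝ) ^ (-(Nat.find hj : ℤ)) :=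
  perturbed_function_general a hinj φ hφ₁ hφ₂ ψ hψ Φ hΦ f hf j hj fj hfj
end

section
/- For j ∈ A, near 2^{−j} the function f' consists of a single narrow blip: for every t ∈ ℝ with |t − 2^{−j}| ≤ 2^{−(j+2)} one has f'(t) = 4^{−j} φ(2^{ν(j)+j+2}(t − 2^{−j})); in particular f'(t) = 0 whenever 2^{−(ν(j)+j+2)} ≤ |t − 2^{−j}| ≤ 2^{−(j+2)}. -/
/-! The blips `ψ n` sit at the dyadic points `2^{-a(n)}`, and the closed ball of radius
`2^{-(j+2)}` around `2^{-j}` keeps distance `2^{-(k+2)}` from every other dyadic point `2^{-k}`.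
Since `ψ n` is supported within `2^{-(n+a(n)+2)} ≤ 2^{-(a(n)+2)}` of its centre, near `2^{-j}` only
the blips centred at `2^{-j}` survive, and by injectivity of `a` that is the single term
`n = ν(j)`. -/

lemma two_zpow_neg_add_two (m : ℤ) : (2 : ℝ) ^ (-(m + 2)) = 2 ^ (-m) / 4 := by
  rw [neg_add, zpow_add₀ two_ne_zero]
  norm_num [div_eq_mul_inv]

lemma two_zpow_neg_le_half_of_lt_s11 {j k : ℕ} (h : k < j) :
    (2 : ℝ) ^ (-(j : ℤ)) ≤ 2 ^ (-(k : ℤ)) / 2 := by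
  calc (2 : ℝ) ^ (-(j : ℤ)) ≤ 2 ^ (-(k : ℤ) - 1) := zpow_le_zpow_right₀ one_le_two (by omega)
    _ = 2 ^ (-(k : ℤ)) / 2 := by rw [zpow_sub_one₀ two_ne_zero, div_eq_mul_inv]

lemma le_abs_sub_two_zpow_of_ne {j k : ℕ} (hkj : k ≠ j) {t : ℝ}
    (ht : |t - 2 ^ (-(j : ℤ))| ≤ (2 : ℝ) ^ (-((j : ℤ) + 2))) :
    (2 : ℝ) ^ (-((k : ℤ) + 2)) ≤ |t - 2 ^ (-(k : ℤ))| := by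
  rw [two_zpow_neg_add_two] at ht ⊢
  obtain ⟨ht_lo, ht_hi⟩ := abs_le.mp ht
  have hk_pos : (0 : ℝ) < 2 ^ (-(k : ℤ)) := zpow_pos two_pos _
  rcases hkj.lt_or_gt with h | h
  · have := two_zpow_neg_le_half_of_lt_s11 h
    rw [abs_sub_comm]
    exact le_abs.mpr (Or.inl (by linarith))
  · have := two_zpow_neg_le_half_of_lt_s11 h
    exact le_abs.mpr (Or.inl (by linarith))

lemma one_le_abs_two_pow_mul {m : ℕ} {x : ℝ} (h : (2 : ℝ) ^ (-(m : ℤ)) ≤ |x|) :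
    1 ≤ |2 ^ m * x| := by
  rw [zpow_neg, zpow_natCast] at h
  rw [abs_mul, abs_of_pos (pow_pos two_pos m)]
  exact (inv_le_iff_one_le_mul₀' (pow_pos two_pos m)).mp h

lemma eq_zero_of_two_zpow_neg_le_abs {φ : ℝ → ℝ} (hφ : ∀ x : ℝ, 1 ≤ |x| → φ x = 0)
    {m : ℕ} {x : ℝ} (h : (2 : ℝ) ^ (-(m : ℤ)) ≤ |x|) : φ (2 ^ m * x) = 0 :=
  hφ _ (one_le_abs_two_pow_mul h)

theorem single_blip_near_general (a : ℕ → ℕ)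
    (hinj : Function.Injective a)
    (φ : ℝ → ℝ)
    (hφ₂ : ∀ x : ℝ, 1 ≤ |x| → φ x = 0)
    (ψ : ℕ → ℝ → ℝ)
    (hψ : ∀ n : ℕ, ∀ x : ℝ, ψ n x =
      (4 : ℝ) ^ (-(a n : ℤ)) * φ ((2 : ℝ) ^ (n + a n + 2) * (x - (2 : ℝ) ^ (-(a n : ℤ)))))
    (f' : ℝ → ℝ) (hf' : ∀ x : ℝ, f' x = ∑' n : ℕ, ψ n x)
    (j : ℕ) (hj : ∃ n : ℕ, a n = j) :
    (∀ t : ℝ, |t - (2 : ℝ) ^ (-(j : ℤ))| ≤ (2 : ℝ) ^ (-((j : ℤ) + 2)) →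
      f' t = (4 : ℝ) ^ (-(j : ℤ)) *
        φ ((2 : ℝ) ^ (Nat.find hj + j + 2) * (t - (2 : ℝ) ^ (-(j : ℤ))))) ∧
    (∀ t : ℝ, (2 : ℝ) ^ (-((Nat.find hj : ℤ) + j + 2)) ≤ |t - (2 : ℝ) ^ (-(j : ℤ))| →
      |t - (2 : ℝ) ^ (-(j : ℤ))| ≤ (2 : ℝ) ^ (-((j : ℤ) + 2)) → f' t = 0) := by
  have hν : a (Nat.find hj) = j := Nat.find_spec hj
  have near : ∀ t : ℝ, |t - (2 : ℝ) ^ (-(j : ℤ))| ≤ (2 : ℝ) ^ (-((j : ℤ) + 2)) →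
      f' t = (4 : ℝ) ^ (-(j : ℤ)) *
        φ ((2 : ℝ) ^ (Nat.find hj + j + 2) * (t - (2 : ℝ) ^ (-(j : ℤ)))) := by
    intro t ht
    have other_zero : ∀ n ≠ Nat.find hj, ψ n t = 0 := by
      intro n hn
      have hnj : a n ≠ j := fun h => hn (hinj (h.trans hν.symm))
      have far : (2 : ℝ) ^ (-((n + a n + 2 : ℕ) : ℤ)) ≤ |t - 2 ^ (-(a n : ℤ))| :=
        (zpow_le_zpow_right₀ one_le_two (by omega)).trans (le_abs_sub_two_zpow_of_ne hnj ht)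
      rw [hψ, eq_zero_of_two_zpow_neg_le_abs hφ₂ far, mul_zero]
    rw [hf', tsum_eq_single _ other_zero, hψ, hν]
  refine ⟨near, fun t hfar hnear => ?_⟩
  rw [near t hnear, eq_zero_of_two_zpow_neg_le_abs hφ₂ (by exact_mod_cast hfar), mul_zero]

/-- For j ∈ A, near 2^{−j} the sum f' consists of the single blip ψ_{ν(j)}:
for |t − 2^{−j}| ≤ 2^{−(j+2)} one has f'(t) = 4^{−j} φ(2^{ν(j)+j+2}(t − 2^{−j}));
in particular f'(t) = 0 whenever 2^{−(ν(j)+j+2)} ≤ |t − 2^{−j}| ≤ 2^{−(j+2)}. -/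
theorem single_blip_near (a : ℕ → ℕ) (ha : Computable a)
    (hinj : Function.Injective a)
    (φ : ℝ → ℝ)
    (hφ₁ : ∀ x : ℝ, |x| < 1 → φ x = Real.exp (-(x ^ 2 / (1 - x ^ 2))))
    (hφ₂ : ∀ x : ℝ, 1 ≤ |x| → φ x = 0)
    (ψ : ℕ → ℝ → ℝ)
    (hψ : ∀ n : ℕ, ∀ x : ℝ, ψ n x =
      (4 : ℝ) ^ (-(a n : ℤ)) * φ ((2 : ℝ) ^ (n + a n + 2) * (x - (2 : ℝ) ^ (-(a n : ℤ)))))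
    (f' : ℝ → ℝ) (hf' : ∀ x : ℝ, f' x = ∑' n : ℕ, ψ n x)
    (j : ℕ) (hj : ∃ n : ℕ, a n = j) :
    (∀ t : ℝ, |t - (2 : ℝ) ^ (-(j : ℤ))| ≤ (2 : ℝ) ^ (-((j : ℤ) + 2)) →
      f' t = (4 : ℝ) ^ (-(j : ℤ)) *
        φ ((2 : ℝ) ^ (Nat.find hj + j + 2) * (t - (2 : ℝ) ^ (-(j : ℤ))))) ∧
    (∀ t : ℝ, (2 : ℝ) ^ (-((Nat.find hj : ℤ) + j + 2)) ≤ |t - (2 : ℝ) ^ (-(j : ℤ))| →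
      |t - (2 : ℝ) ^ (-(j : ℤ))| ≤ (2 : ℝ) ^ (-((j : ℤ) + 2)) → f' t = 0) :=
  single_blip_near_general a hinj φ hφ₂ ψ hψ f' hf' j hj
end

section
/- Let T be a tree having at least one infinite path and let λ be its leftmost infinite path. Then the trial-and-error sequence (u_n) is well defined for all n (at each step, if u_n is terminal then it has the form v011…1, so the backtracking rule applies), and no u_n lies to the right of λ. -/
/-- `T` is a tree: a set of finite binary strings closed under taking prefixes. -/
def IsBinTree (T : Set (List Bool)) : Prop :=
  ∀ u ∈ T, ∀ v : List Bool, v.IsPrefix u → v ∈ T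

/-- The length-`n` initial segment of an infinite binary sequence, as a string. -/
def initSeg (x : ℕ → Bool) (n : ℕ) : List Bool :=
  List.ofFn fun i : Fin n => x i

/-- `x` is an infinite path of `T`: every finite initial segment belongs to `T`. -/
def IsInfPath (T : Set (List Bool)) (x : ℕ → Bool) : Prop :=
  ∀ n : ℕ, initSeg x n ∈ T

/-- A node `u` is fertile if some infinite path of `T` has `u` as initial segment. -/
def FertileNode (T : Set (List Bool)) (u : List Bool) : Prop :=
  ∃ x : ℕ → Bool, IsInfPath T x ∧ ∀ i : Fin u.length, x i = u.get i

/-- A node `u` is terminal if neither `u0` nor `u1` belongs to `T`. -/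
def TerminalNode (T : Set (List Bool)) (u : List Bool) : Prop :=
  u ++ [false] ∉ T ∧ u ++ [true] ∉ T

/-!
The leftmost path λ is itself an infinite path of `T`, so its initial segments are never terminal.
A string that is not to the right of λ and consists of an initial segment of λ followed by `1`'s
is again an initial segment of λ, hence not terminal. Both claims follow by induction on `n`: a
terminal `u n` that is not to the right of λ must contain a `0`, so it has the form `v01…1`; and
backtracking to `v1` could only cross λ if `v` were an initial segment of λ with `λ |v| = 0`,
which would make `u n = v01…1` an initial segment of λ.
-/

lemma List.exists_eq_append_false_cons_replicate_true {u : List Bool} (h : false ∈ u) :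
    ∃ (v : List Bool) (m : ℕ), u = v ++ false :: List.replicate m true := by
  induction u using List.reverseRecOn with
  | nil => simp at h
  | append_singleton w b ih =>
    cases b
    · exact ⟨w, 0, rfl⟩
    · obtain ⟨v, m, rfl⟩ := ih (by simpa using h)
      exact ⟨v, m + 1, by simp [List.replicate_succ']⟩

namespace TrialAndError

lemma initSeg_length (x : ℕ → Bool) (n : ℕ) : (initSeg x n).length = n :=
  List.length_ofFn

lemma initSeg_succ (x : ℕ → Bool) (n : ℕ) : initSeg x (n + 1) = initSeg x n ++ [x n] := by
  rw [initSeg, List.ofFn_succ', List.concat_eq_append]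
  rfl

lemma getElem_initSeg (x : ℕ → Bool) {n j : ℕ} (h : j < (initSeg x n).length) :
    (initSeg x n)[j] = x j := by
  simp [initSeg]

lemma fertileNode_iff {T : Set (List Bool)} {u : List Bool} :
    FertileNode T u ↔ ∃ x : ℕ → Bool, IsInfPath T x ∧ initSeg x u.length = u := by
  refine exists_congr fun x => and_congr_right fun _ => ⟨fun h => ?_, fun h i => ?_⟩
  · exact List.ext_getElem (initSeg_length x _) fun j hj _ =>
      (getElem_initSeg x hj).trans (h ⟨j, by simpa [initSeg_length] using hj⟩)
  · rw [List.get_eq_getElem, ← List.getElem_of_eq h, getElem_initSeg]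
    simp [initSeg_length]

variable {T : Set (List Bool)} {lam : ℕ → Bool}

/-- A path through `initSeg lam n` must continue with `lam n`: continuing with `false` when
`lam n = true` would contradict `hlam`. -/
lemma exists_isInfPath_initSeg_eq (hpath : ∃ x : ℕ → Bool, IsInfPath T x)
    (hlam : ∀ n : ℕ, lam n = false ↔ FertileNode T (initSeg lam n ++ [false])) (n : ℕ) :
    ∃ x : ℕ → Bool, IsInfPath T x ∧ initSeg x n = initSeg lam n := by
  induction n with
  | zero =>
    obtain ⟨x, hx⟩ := hpath
    exact ⟨x, hx, rfl⟩
  | succ n ih =>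
    cases hn : lam n
    · obtain ⟨y, hy, hye⟩ := fertileNode_iff.1 ((hlam n).1 hn)
      refine ⟨y, hy, ?_⟩
      rw [initSeg_succ lam, hn]
      simpa [initSeg_length] using hye
    · obtain ⟨x, hx, hxe⟩ := ih
      cases hxn : x n
      · have : FertileNode T (initSeg lam n ++ [false]) :=
          fertileNode_iff.2 ⟨x, hx, by simp [initSeg_length, initSeg_succ, hxe, hxn]⟩
        simp [(hlam n).2 this] at hn
      · exact ⟨x, hx, by rw [initSeg_succ, initSeg_succ, hxe, hxn, hn]⟩

lemma isInfPath_of_leftmost (hpath : ∃ x : ℕ → Bool, IsInfPath T x)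
    (hlam : ∀ n : ℕ, lam n = false ↔ FertileNode T (initSeg lam n ++ [false])) :
    IsInfPath T lam := fun n => by
  obtain ⟨x, hx, hxe⟩ := exists_isInfPath_initSeg_eq hpath hlam n
  exact hxe ▸ hx n

lemma not_terminalNode_initSeg (hlp : IsInfPath T lam) (n : ℕ) :
    ¬ TerminalNode T (initSeg lam n) := fun ht => by
  have h := hlp (n + 1)
  rw [initSeg_succ] at h
  cases hn : lam n
  · exact ht.1 (hn ▸ h)
  · exact ht.2 (hn ▸ h)

def RightOf (lam : ℕ → Bool) (u : List Bool) : Prop :=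
  ∃ k, lam k = false ∧ initSeg lam k ++ [true] <+: u

lemma rightOf_iff_getD {u : List Bool} :
    RightOf lam u ↔ ∃ i < u.length, (∀ j < i, u.getD j false = lam j) ∧
      u.getD i false = true ∧ lam i = false := by
  constructor
  · rintro ⟨k, hk, hpre⟩
    obtain ⟨hlen, hget⟩ := List.prefix_iff_getElem.1 hpre
    simp only [List.length_append, initSeg_length, List.length_singleton] at hlen hget
    refine ⟨k, by omega, fun j hj => ?_, ?_, hk⟩
    · rw [List.getD_eq_getElem _ _ (by omega), ← hget j (by omega),
        List.getElem_append_left (by simp [initSeg_length]; omega), getElem_initSeg]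
    · rw [List.getD_eq_getElem _ _ (by omega), ← hget k (by omega),
        List.getElem_append_right (by simp [initSeg_length])]
      simp [initSeg_length]
  · rintro ⟨i, hi, hagree, htrue, hi'⟩
    refine ⟨i, hi', List.prefix_iff_getElem.2 ⟨by simp [initSeg_length]; omega, fun j hj => ?_⟩⟩
    rw [List.getElem_append]
    split_ifs with h
    · rw [getElem_initSeg, ← hagree j (by simpa [initSeg_length] using h), List.getD_eq_getElem]
    · obtain rfl : j = i := by simp [initSeg_length] at hj h; omega
      rw [List.getD_eq_getElem _ _ hi] at htrue
      simp [initSeg_length, htrue]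

lemma RightOf.of_append_false {u : List Bool} (h : RightOf lam (u ++ [false])) :
    RightOf lam u := by
  obtain ⟨k, hk, hpre⟩ := h
  refine ⟨k, hk, (List.prefix_concat_iff.1 hpre).resolve_left fun he => ?_⟩
  simpa using congrArg List.getLast? he

lemma eq_initSeg_of_not_rightOf {k m : ℕ}
    (h : ¬ RightOf lam (initSeg lam k ++ List.replicate m true)) :
    initSeg lam k ++ List.replicate m true = initSeg lam (k + m) := by
  induction m generalizing k with
  | zero => simp
  | succ m ih =>
    cases hk : lam k
    · exact absurd ⟨k, hk, by simp [List.replicate_succ]⟩ h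
    · have : initSeg lam k ++ List.replicate (m + 1) true
          = initSeg lam (k + 1) ++ List.replicate m true := by
        simp [initSeg_succ, hk, List.replicate_succ]
      rw [this, ih (this ▸ h), Nat.add_right_comm, Nat.add_assoc]

lemma exists_eq_append_false_cons_replicate_true_of_terminalNode (hlp : IsInfPath T lam)
    {u : List Bool} (hr : ¬ RightOf lam u) (ht : TerminalNode T u) :
    ∃ (v : List Bool) (m : ℕ), u = v ++ false :: List.replicate m true := by
  refine List.exists_eq_append_false_cons_replicate_true (by_contra fun hf => ?_)
  have hu : u = initSeg lam 0 ++ List.replicate u.length true :=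
    List.eq_replicate_iff.2 ⟨rfl, fun b hb => by cases b <;> simp_all⟩
  rw [hu, eq_initSeg_of_not_rightOf (hu ▸ hr)] at ht
  exact not_terminalNode_initSeg hlp _ ht

lemma not_rightOf_backtrack (hlp : IsInfPath T lam) {v : List Bool} {m : ℕ}
    (hr : ¬ RightOf lam (v ++ false :: List.replicate m true))
    (ht : TerminalNode T (v ++ false :: List.replicate m true)) :
    ¬ RightOf lam (v ++ [true]) := by
  rintro ⟨k, hk, hpre⟩
  rcases List.prefix_concat_iff.1 hpre with he | hpre
  · obtain ⟨rfl, -⟩ := List.append_inj' he rfl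
    have hu : initSeg lam k ++ false :: List.replicate m true
        = initSeg lam (k + 1) ++ List.replicate m true := by
      simp [initSeg_succ, hk]
    rw [hu, eq_initSeg_of_not_rightOf (hu ▸ hr)] at ht
    exact not_terminalNode_initSeg hlp _ ht
  · exact hr ⟨k, hk, hpre.trans (List.prefix_append _ _)⟩

end TrialAndError

open TrialAndError in
theorem trial_and_error_wellDefined_not_right_general (T : Set (List Bool))
    (hpath : ∃ x : ℕ → Bool, IsInfPath T x)
    (lam : ℕ → Bool)
    (hlam : ∀ n : ℕ, lam n = false ↔ FertileNode T (initSeg lam n ++ [false]))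
    (u : ℕ → List Bool) (hu0 : u 0 = [])
    (hu1 : ∀ n : ℕ, ¬ TerminalNode T (u n) → u (n + 1) = u n ++ [false])
    (hu2 : ∀ n : ℕ, ∀ v : List Bool, ∀ m : ℕ, TerminalNode T (u n) →
      u n = v ++ false :: List.replicate m true → u (n + 1) = v ++ [true]) :
    (∀ n : ℕ, TerminalNode T (u n) →
      ∃ (v : List Bool) (m : ℕ), u n = v ++ false :: List.replicate m true) ∧
    (∀ n : ℕ, ¬ ∃ i < (u n).length, (∀ j < i, (u n).getD j false = lam j) ∧
      (u n).getD i false = true ∧ lam i = false) := by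
  have hlp : IsInfPath T lam := isInfPath_of_leftmost hpath hlam
  have hright : ∀ n, ¬ RightOf lam (u n) := by
    intro n
    induction n with
    | zero => simp [hu0, RightOf]
    | succ n ih =>
      by_cases ht : TerminalNode T (u n)
      · obtain ⟨v, m, hvm⟩ :=
          exists_eq_append_false_cons_replicate_true_of_terminalNode hlp ih ht
        rw [hu2 n v m ht hvm]
        exact not_rightOf_backtrack hlp (hvm ▸ ih) (hvm ▸ ht)
      · rw [hu1 n ht]
        exact fun h => ih h.of_append_false
  exact ⟨fun n => exists_eq_append_false_cons_replicate_true_of_terminalNode hlp (hright n),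
    fun n => mt rightOf_iff_getD.2 (hright n)⟩

/-- The trial-and-error sequence is well defined (each terminal `u_n` has the form
`v011…1`) and no `u_n` lies to the right of the leftmost infinite path λ. -/
theorem trial_and_error_wellDefined_not_right (T : Set (List Bool))
    (hT : IsBinTree T) (hpath : ∃ x : ℕ → Bool, IsInfPath T x)
    (lam : ℕ → Bool)
    (hlam : ∀ n : ℕ, lam n = false ↔ FertileNode T (initSeg lam n ++ [false]))
    (u : ℕ → List Bool) (hu0 : u 0 = [])
    (hu1 : ∀ n : ℕ, ¬ TerminalNode T (u n) → u (n + 1) = u n ++ [false])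
    (hu2 : ∀ n : ℕ, ∀ v : List Bool, ∀ m : ℕ, TerminalNode T (u n) →
      u n = v ++ false :: List.replicate m true → u (n + 1) = v ++ [true]) :
    (∀ n : ℕ, TerminalNode T (u n) →
      ∃ (v : List Bool) (m : ℕ), u n = v ++ false :: List.replicate m true) ∧
    (∀ n : ℕ, ¬ ∃ i < (u n).length, (∀ j < i, (u n).getD j false = lam j) ∧
      (u n).getD i false = true ∧ lam i = false) :=
  trial_and_error_wellDefined_not_right_general T hpath lam hlam u hu0 hu1 hu2
end

section
/- Let T be a tree having at least one infinite path and let λ be its leftmost infinite path. Then the trial-and-error sequence (u_n) reaches every initial segment of λ: for every J ∈ ℕ there exists n such that u_n = λ(0)λ(1)…λ(J−1). -/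
lemma initSeg_succ (x : ℕ → Bool) (n : ℕ) : initSeg x (n + 1) = initSeg x n ++ [x n] := by
  rw [initSeg, initSeg, List.ofFn_succ']
  simp

lemma initSeg_getD {w : List Bool} {n : ℕ} (hn : n ≤ w.length) :
    initSeg (fun i => w.getD i false) n = w.take n := by
  apply List.ext_getElem (by simp [initSeg, hn])
  intro i hi _
  simp only [initSeg, List.length_ofFn] at hi
  simp [initSeg, List.getElem?_eq_getElem (show i < w.length by omega)]

lemma isClosed_setOf_initSeg_mem (S : Set (List Bool)) (n : ℕ) :
    IsClosed {x : ℕ → Bool | initSeg x n ∈ S} :=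
  (isClosed_discrete {f : Fin n → Bool | List.ofFn f ∈ S}).preimage
    (f := fun (x : ℕ → Bool) (i : Fin n) => x i) (continuous_pi fun i => continuous_apply (i : ℕ))

lemma fertileNode_iff {T : Set (List Bool)} {v : List Bool} :
    FertileNode T v ↔ ∃ x, IsInfPath T x ∧ initSeg x v.length = v := by
  refine exists_congr fun x => and_congr_right fun _ => ?_
  have hinj := List.ofFn_inj (f := fun i : Fin v.length => x i) (g := v.get)
  rw [List.ofFn_get] at hinj
  rw [initSeg, hinj, funext_iff]

namespace FertileNode

variable {T : Set (List Bool)} {v : List Bool}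

lemma nil (hpath : ∃ x, IsInfPath T x) : FertileNode T [] :=
  let ⟨x, hx⟩ := hpath
  fertileNode_iff.2 ⟨x, hx, rfl⟩

lemma exists_append_singleton (hv : FertileNode T v) : ∃ b, FertileNode T (v ++ [b]) := by
  obtain ⟨x, hx, hxv⟩ := fertileNode_iff.1 hv
  refine ⟨x v.length, fertileNode_iff.2 ⟨x, hx, ?_⟩⟩
  simp [initSeg_succ, hxv]

lemma not_terminalNode (hv : FertileNode T v) : ¬ TerminalNode T v := by
  rintro ⟨hfalse, htrue⟩
  obtain ⟨x, hx, hxv⟩ := fertileNode_iff.1 hv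
  have hmem := hx (v.length + 1)
  rw [initSeg_succ, hxv] at hmem
  cases hb : x v.length <;> rw [hb] at hmem
  exacts [hfalse hmem, htrue hmem]

/-- König's lemma, via compactness of `ℕ → Bool`: the sequences extending `v` whose
length-`n` segment lies in `T` form closed, decreasing, nonempty sets. -/
lemma of_forall_exists_extension (hT : IsBinTree T)
    (h : ∀ n, ∃ w ∈ T, v <+: w ∧ n ≤ w.length) : FertileNode T v := by
  let C : ℕ → Set (ℕ → Bool) := fun n => {x | initSeg x v.length ∈ ({v} : Set _)} ∩
    {x | initSeg x n ∈ T}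
  have hC_anti : ∀ n, C (n + 1) ⊆ C n := fun n x ⟨hxv, hxT⟩ =>
    ⟨hxv, hT _ hxT _ (by rw [initSeg_succ]; exact List.prefix_append _ _)⟩
  have hC_nonempty : ∀ n, (C n).Nonempty := by
    intro n
    obtain ⟨w, hwT, hvw, hnw⟩ := h n
    refine ⟨fun i => w.getD i false, ?_, ?_⟩
    · rw [Set.mem_ofPred_eq, initSeg_getD hvw.length_le, ← List.prefix_iff_eq_take.1 hvw]
      rfl
    · rw [Set.mem_ofPred_eq, initSeg_getD hnw]
      exact hT _ hwT _ (List.take_prefix _ _)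
  have hC_closed : ∀ n, IsClosed (C n) := fun n =>
    (isClosed_setOf_initSeg_mem _ _).inter (isClosed_setOf_initSeg_mem _ _)
  obtain ⟨x, hx⟩ := IsCompact.nonempty_iInter_of_sequence_nonempty_isCompact_isClosed C
    hC_anti hC_nonempty (hC_closed 0).isCompact hC_closed
  rw [Set.mem_iInter] at hx
  exact fertileNode_iff.2 ⟨x, fun n => (hx n).2, (hx 0).1⟩

end FertileNode

def HeightLE (T : Set (List Bool)) (v : List Bool) (h : ℕ) : Prop :=
  ∀ w ∈ T, v <+: w → w.length ≤ v.length + h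

namespace HeightLE

variable {T : Set (List Bool)} {v : List Bool} {h : ℕ}

lemma terminalNode (hv : HeightLE T v 0) : TerminalNode T v := by
  constructor <;> intro hmem <;> simpa using hv _ hmem (List.prefix_append _ _)

lemma append_singleton (hv : HeightLE T v (h + 1)) (b : Bool) : HeightLE T (v ++ [b]) h :=
  fun w hw hvw => by
    have := hv w hw ((List.prefix_append _ _).trans hvw)
    simp only [List.length_append, List.length_singleton]
    omega

lemma exists_of_not_fertileNode (hT : IsBinTree T) (hv : ¬ FertileNode T v) :
    ∃ h, HeightLE T v h := by
  by_contra! hunbounded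
  refine hv (FertileNode.of_forall_exists_extension hT fun n => ?_)
  obtain ⟨w, hwT, hvw, hlen⟩ : ∃ w ∈ T, v <+: w ∧ v.length + n < w.length := by
    simpa [HeightLE] using hunbounded n
  exact ⟨w, hwT, hvw, by omega⟩

end HeightLE

section TrialAndError

variable {T : Set (List Bool)} {u : ℕ → List Bool}

lemma exists_eq_append_true_of_heightLE
    (hu1 : ∀ n : ℕ, ¬ TerminalNode T (u n) → u (n + 1) = u n ++ [false])
    (hu2 : ∀ n : ℕ, ∀ v : List Bool, ∀ m : ℕ, TerminalNode T (u n) →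
      u n = v ++ false :: List.replicate m true → u (n + 1) = v ++ [true])
    (h : ℕ) (p : List Bool) (k n : ℕ)
    (hheight : HeightLE T (p ++ false :: List.replicate k true) h)
    (hn : u n = p ++ false :: List.replicate k true) :
    ∃ m, u m = p ++ [true] := by
  induction h generalizing p k n with
  | zero => exact ⟨n + 1, hu2 n p k (hn ▸ hheight.terminalNode) hn⟩
  | succ h ih =>
    by_cases hterm : TerminalNode T (u n)
    · exact ⟨n + 1, hu2 n p k hterm hn⟩
    set v := p ++ false :: List.replicate k true
    -- The subtree of `v 0` is exhausted first, which brings the sequence to `v 1`.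
    obtain ⟨m, hm⟩ := ih v 0 (n + 1) (by simpa using hheight.append_singleton false)
      (by simp [hu1 n hterm, hn])
    have hv1 : v ++ [true] = p ++ false :: List.replicate (k + 1) true := by
      simp [v, List.replicate_succ']
    exact ih p (k + 1) m (hv1 ▸ hheight.append_singleton true) (hm.trans hv1)

end TrialAndError

lemma fertileNode_initSeg_of_leftmost {T : Set (List Bool)}
    (hpath : ∃ x : ℕ → Bool, IsInfPath T x) {lam : ℕ → Bool}
    (hlam : ∀ n : ℕ, lam n = false ↔ FertileNode T (initSeg lam n ++ [false])) (n : ℕ) :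
    FertileNode T (initSeg lam n) := by
  induction n with
  | zero => exact FertileNode.nil hpath
  | succ n ih =>
    rw [initSeg_succ]
    obtain ⟨b, hb⟩ := ih.exists_append_singleton
    cases hlamn : lam n
    · exact (hlam n).1 hlamn
    · cases b
      · simp [← hlam n, hlamn] at hb
      · exact hb

/-- The trial-and-error sequence reaches every initial segment of the leftmost
infinite path λ: for every J there exists n with u_n = λ(0)…λ(J−1). -/
theorem trial_and_error_reaches_leftmost (T : Set (List Bool))
    (hT : IsBinTree T) (hpath : ∃ x : ℕ → Bool, IsInfPath T x)
    (lam : ℕ → Bool)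
    (hlam : ∀ n : ℕ, lam n = false ↔ FertileNode T (initSeg lam n ++ [false]))
    (u : ℕ → List Bool) (hu0 : u 0 = [])
    (hu1 : ∀ n : ℕ, ¬ TerminalNode T (u n) → u (n + 1) = u n ++ [false])
    (hu2 : ∀ n : ℕ, ∀ v : List Bool, ∀ m : ℕ, TerminalNode T (u n) →
      u n = v ++ false :: List.replicate m true → u (n + 1) = v ++ [true]) :
    ∀ J : ℕ, ∃ n : ℕ, u n = initSeg lam J := by
  intro J
  induction J with
  | zero => exact ⟨0, hu0⟩
  | succ J ih =>
    obtain ⟨n, hn⟩ := ih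
    have hnext : u (n + 1) = initSeg lam J ++ [false] := by
      rw [hu1 n (hn ▸ (fertileNode_initSeg_of_leftmost hpath hlam J).not_terminalNode), hn]
    rw [initSeg_succ]
    cases hlamJ : lam J
    · exact ⟨n + 1, hnext⟩
    · have hbarren : ¬ FertileNode T (initSeg lam J ++ [false]) := by simp [← hlam J, hlamJ]
      obtain ⟨h, hheight⟩ := HeightLE.exists_of_not_fertileNode hT hbarren
      exact exists_eq_append_true_of_heightLE hu1 hu2 h (initSeg lam J) 0 (n + 1)
        (by simpa using hheight) (by simpa using hnext)
end

section
/- There exists a tree T (a set of finite binary strings closed under taking prefixes) whose membership predicate is computable, which has an infinite path, but has no computable infinite path: no computable function x : ℕ → {0,1} has all of its initial segments in T. -/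
/-!
Kleene's tree: a string `u` survives as long as, for each `e < u.length`, the `e`-th program run
on input `e` for `u.length` steps has not output the code of the bit `u[e]`. Being witnessed by
a finite computation, this is decidable, and it is preserved under prefixes since `evaln` is
monotone in the step bound. The paths are exactly the `x` with `φₑ(e) ≠ encode (x e)` for all `e`;
`e ↦ decide (φₑ(e) = 0)` is one, while a computable `x` is not: if program `e` computes it,
then `φₑ(e) = encode (x e)`.
-/

open Encodable
open Nat.Partrec (Code)
open Nat.Partrec.Code

def kleeneTree : Set (List Bool) :=
  {u | ∀ e < u.length, encode (u.getD e false) ∉ evaln u.length (Denumerable.ofNat Code e) e}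

def IsPath (T : Set (List Bool)) (x : ℕ → Bool) : Prop :=
  ∀ n, (List.ofFn fun i : Fin n => x i) ∈ T

theorem mem_kleeneTree_of_isPrefix {u v : List Bool} (hu : u ∈ kleeneTree) (hvu : v <+: u) :
    v ∈ kleeneTree := by
  intro e he hev
  have hle := hvu.length_le
  have hget : v.getD e false = u.getD e false := by
    rw [List.getD_eq_getElem _ _ he, List.getD_eq_getElem _ _ (he.trans_le hle), hvu.getElem he]
  exact hu e (he.trans_le hle) (hget ▸ evaln_mono hle hev)

theorem primrecPred_mem_kleeneTree : PrimrecPred (· ∈ kleeneTree) := by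
  have hdiag : PrimrecRel fun (e : ℕ) (u : List Bool) =>
      encode (u.getD e false) ∉ evaln u.length (Denumerable.ofNat Code e) e := by
    refine PrimrecPred.not (Primrec.eq.comp ?_ (Primrec.option_some.comp ?_))
    · exact primrec_evaln.comp (((Primrec.list_length.comp Primrec.snd).pair
        ((Primrec.ofNat Code).comp Primrec.fst)).pair Primrec.fst)
    · exact Primrec.encode.comp ((Primrec.list_getD false).comp Primrec.snd Primrec.fst)
  exact (hdiag.forall_mem_list.comp (Primrec.list_range.comp Primrec.list_length)
    Primrec.id).of_eq fun _ => by simp only [List.mem_range]; rfl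

theorem getD_ofFn_of_lt {α : Type*} {n e : ℕ} (x : ℕ → α) (d : α) (he : e < n) :
    (List.ofFn fun i : Fin n => x i).getD e d = x e := by
  simp [he]

theorem isPath_kleeneTree_iff {x : ℕ → Bool} :
    IsPath kleeneTree x ↔ ∀ e, encode (x e) ∉ (Denumerable.ofNat Code e).eval e := by
  constructor
  · intro hx e hev
    obtain ⟨m, hm⟩ := evaln_complete.1 hev
    have hn : e < max m (e + 1) := by omega
    exact hx (max m (e + 1)) e (by simp [hn])
      (by simpa [getD_ofFn_of_lt x false hn] using evaln_mono (le_max_left _ _) hm)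
  · intro hx n e he hev
    simp only [List.length_ofFn] at he hev
    exact hx e (evaln_sound (getD_ofFn_of_lt x false he ▸ hev))

theorem exists_isPath_kleeneTree : ∃ x, IsPath kleeneTree x := by
  classical
  refine ⟨fun e => decide (0 ∈ (Denumerable.ofNat Code e).eval e),
    isPath_kleeneTree_iff.2 fun e hev => ?_⟩
  by_cases h0 : 0 ∈ (Denumerable.ofNat Code e).eval e
  · simp only [h0, decide_true, encode_true] at hev
    exact one_ne_zero (Part.mem_unique hev h0)
  · simp_all

theorem Computable.exists_code_eval_eq_some_encode {α : Type*} [Primcodable α] {f : ℕ → α}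
    (hf : Computable f) : ∃ c : Code, ∀ n, c.eval n = Part.some (encode (f n)) := by
  obtain ⟨c, hc⟩ := exists_code.1 (Partrec.nat_iff.1 (Computable.encode.comp hf).partrec)
  exact ⟨c, fun n => congrFun hc n⟩

theorem not_isPath_kleeneTree_of_computable {x : ℕ → Bool} (hx : Computable x) :
    ¬ IsPath kleeneTree x := by
  obtain ⟨c, hc⟩ := hx.exists_code_eval_eq_some_encode
  rw [isPath_kleeneTree_iff]
  intro hpath
  apply hpath (encode c)
  rw [Denumerable.ofNat_encode, hc]
  exact Part.mem_some _

/-- There is a tree of finite binary strings with computable membership predicate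
which has an infinite path but no computable infinite path. -/
theorem exists_computable_tree_no_computable_path :
    ∃ T : Set (List Bool),
      (∀ u ∈ T, ∀ v : List Bool, v.IsPrefix u → v ∈ T) ∧
      ComputablePred (fun u : List Bool => u ∈ T) ∧
      (∃ x : ℕ → Bool, ∀ n : ℕ, (List.ofFn fun i : Fin n => x i) ∈ T) ∧
      (∀ x : ℕ → Bool, Computable x →
        ¬ ∀ n : ℕ, (List.ofFn fun i : Fin n => x i) ∈ T) :=
  ⟨kleeneTree, fun _ hu _ hvu => mem_kleeneTree_of_isPrefix hu hvu,
    primrecPred_mem_kleeneTree.computablePred, exists_isPath_kleeneTree,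
    fun _ hx => not_isPath_kleeneTree_of_computable hx⟩
end

section
/- There exists a compact, self-adjoint, bounded linear operator S on the Hilbert space ℓ²(ℕ) such that for every j ∈ ℕ, the real number 2^{−j} is an eigenvalue of S if and only if j ∈ A; moreover every nonzero eigenvalue of S equals 2^{−a(n)} for some n ∈ ℕ. -/
/-!
Take for `S` the diagonal operator with entries `2 ^ (-a n)`. The eigenvalues of a diagonal
operator are exactly its diagonal entries: an eigenvector has a nonzero coordinate, and the unit
vectors are eigenvectors. Since `a` is injective, the entries tend to `0`, so `S` is the norm limit
of its finite-rank truncations and hence compact.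
-/

open Filter Topology
open scoped ENNReal

namespace lp

variable {ι 𝕜 : Type*} [RCLike 𝕜]

theorem hasSum_single_infty [DecidableEq ι] {E : ι → Type*} [∀ i, NormedAddCommGroup (E i)]
    (f : lp E ∞) (hf : Tendsto (fun i => ‖f i‖) cofinite (𝓝 0)) :
    HasSum (fun i => lp.single ∞ i (f i)) f := by
  rw [HasSum, Metric.tendsto_nhds]
  intro ε hε
  have hlarge : {i | ¬ ‖f i‖ < ε / 2}.Finite := by
    simpa only [eventually_cofinite] using hf.eventually (gt_mem_nhds (half_pos hε))
  filter_upwards [eventually_ge_atTop hlarge.toFinset] with s hs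
  rw [dist_eq_norm]
  refine (norm_le_of_forall_le (half_pos hε).le fun j => ?_).trans_lt (half_lt_self hε)
  simp only [coeFn_sub, Pi.sub_apply, coeFn_sum, Finset.sum_apply, lp.coeFn_single,
    Finset.sum_pi_single]
  by_cases hj : j ∈ s
  · simp [hj, (half_pos hε).le]
  · have : j ∉ hlarge.toFinset := fun h => hj (hs h)
    simp only [Set.Finite.mem_toFinset, Set.mem_ofPred_eq, not_not] at this
    simpa [hj] using this.le

variable (p : ℝ≥0∞) [Fact (1 ≤ p)]

noncomputable def diagonal (w : lp (fun _ : ι => 𝕜) ∞) :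
    lp (fun _ : ι => 𝕜) p →L[𝕜] lp (fun _ : ι => 𝕜) p :=
  holderL p (fun _ => ContinuousLinearMap.mul 𝕜 𝕜) (K := 1)
    (fun _ => ContinuousLinearMap.opNorm_mul_le 𝕜 𝕜) w

@[simp]
theorem diagonal_apply_apply (w : lp (fun _ : ι => 𝕜) ∞) (x : lp (fun _ : ι => 𝕜) p) (i : ι) :
    diagonal p w x i = w i * x i :=
  rfl

theorem isCompactOperator_diagonal_single [DecidableEq ι] (i : ι) (c : 𝕜) :
    IsCompactOperator (diagonal p (lp.single ∞ i c)) := by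
  have hfactor : ⇑(diagonal p (lp.single ∞ i c)) =
      singleContinuousLinearMap 𝕜 (fun _ : ι => 𝕜) p i ∘
        (c • evalCLM 𝕜 (fun _ : ι => 𝕜) p i) := by
    ext x j
    by_cases hj : j = i
    · subst hj; simp [evalCLM]
    · simp [hj]
  rw [hfactor]
  exact (isCompactOperator_of_locallyCompactSpace_dom _).clm_comp _

theorem isCompactOperator_diagonal {w : lp (fun _ : ι => 𝕜) ∞}
    (hw : Tendsto (⇑w) cofinite (𝓝 0)) : IsCompactOperator (diagonal p w) := by
  classical
  have hsum : HasSum (fun i => diagonal p (lp.single ∞ i (w i))) (diagonal p w) :=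
    (hasSum_single_infty w (tendsto_zero_iff_norm_tendsto_zero.mp hw)).mapL (holderL p _ _)
  refine isCompactOperator_of_tendsto hsum (Eventually.of_forall fun s => ?_)
  exact Submodule.sum_mem (compactOperator _ _ _) fun i _ =>
    isCompactOperator_diagonal_single p i (w i)

theorem hasEigenvalue_diagonal_iff (w : lp (fun _ : ι => 𝕜) ∞) (μ : 𝕜) :
    Module.End.HasEigenvalue (diagonal p w : lp (fun _ : ι => 𝕜) p →ₗ[𝕜] lp (fun _ : ι => 𝕜) p)
      μ ↔ μ ∈ Set.range w := by
  classical
  constructor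
  · intro hμ
    obtain ⟨x, hx⟩ := hμ.exists_hasEigenvector
    obtain ⟨i, hi⟩ : ∃ i, x i ≠ 0 := by
      by_contra! h
      exact hx.2 (lp.ext (funext h))
    have hcoord : w i * x i = μ * x i := by
      simpa using congrFun (congrArg (⇑) hx.apply_eq_smul) i
    exact ⟨i, mul_right_cancel₀ hi hcoord⟩
  · rintro ⟨i, rfl⟩
    refine Module.End.hasEigenvalue_of_hasEigenvector (x := lp.single p i 1)
      ⟨Module.End.mem_eigenspace_iff.mpr ?_, fun h => by simpa using congrFun (congrArg (⇑) h) i⟩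
    ext j
    by_cases hj : j = i
    · subst hj; simp
    · simp [hj]

theorem isSelfAdjoint_diagonal {w : lp (fun _ : ι => 𝕜) ∞} (hw : IsSelfAdjoint w) :
    IsSelfAdjoint (diagonal 2 w) := by
  rw [ContinuousLinearMap.isSelfAdjoint_iff_isSymmetric]
  intro x y
  simp only [ContinuousLinearMap.coe_coe, lp.inner_eq_tsum, diagonal_apply_apply]
  congr 1
  funext i
  have hwi : star (w i) = w i := congrFun (congrArg (⇑) hw) i
  simp only [RCLike.inner_apply, map_mul, starRingEnd_apply, hwi]
  ring

end lp

theorem tendsto_two_zpow_neg_cofinite {ι : Type*} {a : ι → ℕ} (hinj : Function.Injective a) :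
    Tendsto (fun n => (2 : ℝ) ^ (-(a n : ℤ))) cofinite (𝓝 0) := by
  have h : Tendsto (fun k : ℕ => (2 : ℝ) ^ (-(k : ℤ))) atTop (𝓝 0) := by
    simp only [zpow_neg, zpow_natCast, ← inv_pow]
    exact tendsto_pow_atTop_nhds_zero_of_lt_one (by norm_num) (by norm_num)
  exact h.comp (Nat.cofinite_eq_atTop ▸ hinj.tendsto_cofinite)

theorem exists_compact_selfAdjoint_spectrum_encoding_general (a : ℕ → ℕ)
    (hinj : Function.Injective a) :
    ∃ S : lp (fun _ : ℕ => ℝ) 2 →L[ℝ] lp (fun _ : ℕ => ℝ) 2,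
      IsCompactOperator S ∧ IsSelfAdjoint S ∧
      (∀ j : ℕ,
        Module.End.HasEigenvalue (S : lp (fun _ : ℕ => ℝ) 2 →ₗ[ℝ] lp (fun _ : ℕ => ℝ) 2)
          ((2 : ℝ) ^ (-(j : ℤ))) ↔ j ∈ Set.range a) ∧
      (∀ μ : ℝ, μ ≠ 0 →
        Module.End.HasEigenvalue (S : lp (fun _ : ℕ => ℝ) 2 →ₗ[ℝ] lp (fun _ : ℕ => ℝ) 2) μ →
        ∃ n : ℕ, μ = (2 : ℝ) ^ (-(a n : ℤ))) := by
  have hw := tendsto_two_zpow_neg_cofinite hinj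
  let w : lp (fun _ : ℕ => ℝ) ∞ := ⟨_, memℓp_infty hw.norm.bddAbove_range_of_cofinite⟩
  refine ⟨lp.diagonal 2 w, lp.isCompactOperator_diagonal 2 hw,
    lp.isSelfAdjoint_diagonal (lp.ext (funext fun _ => star_trivial _)), fun j => ?_,
    fun μ _ hμ => ?_⟩
  · have hzpow : Function.Injective fun k : ℕ => (2 : ℝ) ^ (-(k : ℤ)) := fun j k h => by
      simpa using zpow_right_injective₀ (by norm_num : (0 : ℝ) < 2) (by norm_num) h
    rw [lp.hasEigenvalue_diagonal_iff]
    exact exists_congr fun n => hzpow.eq_iff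
  · obtain ⟨n, rfl⟩ := (lp.hasEigenvalue_diagonal_iff 2 w μ).mp hμ
    exact ⟨n, rfl⟩

/-- There is a compact self-adjoint bounded operator S on ℓ²(ℕ) such that 2^{−j}
is an eigenvalue of S iff j ∈ A, and every nonzero eigenvalue of S is of the
form 2^{−a(n)}. -/
theorem exists_compact_selfAdjoint_spectrum_encoding (a : ℕ → ℕ)
    (ha : Computable a) (hinj : Function.Injective a) :
    ∃ S : lp (fun _ : ℕ => ℝ) 2 →L[ℝ] lp (fun _ : ℕ => ℝ) 2,
      IsCompactOperator S ∧ IsSelfAdjoint S ∧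
      (∀ j : ℕ,
        Module.End.HasEigenvalue (S : lp (fun _ : ℕ => ℝ) 2 →ₗ[ℝ] lp (fun _ : ℕ => ℝ) 2)
          ((2 : ℝ) ^ (-(j : ℤ))) ↔ j ∈ Set.range a) ∧
      (∀ μ : ℝ, μ ≠ 0 →
        Module.End.HasEigenvalue (S : lp (fun _ : ℕ => ℝ) 2 →ₗ[ℝ] lp (fun _ : ℕ => ℝ) 2) μ →
        ∃ n : ℕ, μ = (2 : ℝ) ^ (-(a n : ℤ))) :=
  exists_compact_selfAdjoint_spectrum_encoding_general a hinj
end
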